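/- arXiv:math/0511272 — 12 statements merged into one kernel-verified Lean document; each statement's English description precedes it below -/
import Mathlib

section
/- Let G be an abelian group, let D be a finite distributive lattice, and let φ : D → Sub(G), u ↦ G_u, be a lattice homomorphism into the lattice of subgroups of G. Then every finitely generated subgroup of G_1 (where 1 is the top of D) is contained in some finitely generated subgroup B of G_1 such that the map D → Sub(G), u ↦ B ∩ G_u, is a lattice homomorphism. -/
private lemma fgOfLe {G : Type*} [AddCommGroup G] {H K : AddSubgroup G}
    (hH : H.FG) (hKH : K ≤ H) : K.FG := by
  have hH' : (AddSubgroup.toIntSubmodule H).FG := by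
    rw [Submodule.fg_iff_addSubgroup_fg, AddSubgroup.toIntSubmodule_toAddSubgroup]
    exact hH
  haveI : IsNoetherian ℤ (AddSubgroup.toIntSubmodule H) :=
    isNoetherian_of_fg_of_noetherian _ hH'
  have hK' : (AddSubgroup.toIntSubmodule K).FG := by
    have hc := IsNoetherian.noetherian (Submodule.comap
      (AddSubgroup.toIntSubmodule H).subtype (AddSubgroup.toIntSubmodule K))
    have h2 := hc.map (AddSubgroup.toIntSubmodule H).subtype
    rwa [Submodule.map_comap_subtype, inf_eq_right.mpr
      ((AddSubgroup.toIntSubmodule (M := G)).le_iff_le.mpr hKH)] at h2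
  rw [← AddSubgroup.toIntSubmodule_toAddSubgroup K, ← Submodule.fg_iff_addSubgroup_fg]
  exact hK'

private lemma fgSup {G : Type*} [AddCommGroup G] {H K : AddSubgroup G}
    (hH : H.FG) (hK : K.FG) : (H ⊔ K).FG := by
  classical
  obtain ⟨S, hS⟩ := hH
  obtain ⟨T, hT⟩ := hK
  exact ⟨S ∪ T, by rw [Finset.coe_union, AddSubgroup.closure_union, hS, hT]⟩

private lemma key {G : Type*} [AddCommGroup G] (n : ℕ) :
    ∀ {D : Type*} [DistribLattice D] [Fintype D], ∀ (P : D → Prop),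
      (∀ a b, P a → P b → P (a ⊔ b)) → (∀ a b, P a → P b → P (a ⊓ b)) →
      ∀ (t : D), P t → (∀ u, P u → u ≤ t) →
      {x | P x}.ncard ≤ n →
      ∀ (φ : LatticeHom D (AddSubgroup G)) (A : AddSubgroup G), A.FG → A ≤ φ t →
      ∃ B : AddSubgroup G, B.FG ∧ A ≤ B ∧ B ≤ φ t ∧
        ∀ u v, P u → P v → B ⊓ φ (u ⊔ v) = (B ⊓ φ u) ⊔ (B ⊓ φ v) := by
  induction n with
  | zero =>
    intro D _ _ P hsup hinf t ht htop hcard φ A hAfg hA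
    exfalso
    have hfin : {x | P x}.Finite := Set.toFinite _
    have hemp := (Set.ncard_eq_zero hfin).mp (Nat.le_zero.mp hcard)
    exact Set.eq_empty_iff_forall_notMem.mp hemp t ht
  | succ n IH =>
    intro D _ _ P hsup hinf t ht htop hcard φ A hAfg hA
    have hmono : ∀ {u v : D}, u ≤ v → φ u ≤ φ v := by
      intro u v h
      have h2 : φ (u ⊔ v) = φ u ⊔ φ v := map_sup φ u v
      rw [sup_eq_right.mpr h] at h2
      rw [h2]
      exact le_sup_left
    have hfinP : {x | P x}.Finite := Set.toFinite _
    -- sup-irreducible (within P) elements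
    have hSfin : {x | P x ∧ ∀ a b, P a → P b → a ⊔ b = x → a = x ∨ b = x}.Finite :=
      Set.toFinite _
    have hSne : {x | P x ∧ ∀ a b, P a → P b → a ⊔ b = x → a = x ∨ b = x}.Nonempty := by
      obtain ⟨m, hm, hmin⟩ := hfinP.toFinset.exists_minimal
        ⟨t, hfinP.mem_toFinset.mpr ht⟩
      rw [Set.Finite.mem_toFinset] at hm
      refine ⟨m, hm, fun a b ha hb hab => ?_⟩
      by_contra hcon
      push_neg at hcon
      have halt : a < m := lt_of_le_of_ne (hab ▸ (le_sup_left : a ≤ a ⊔ b)) hcon.1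
      exact lt_irrefl a (lt_of_lt_of_le halt (hmin (hfinP.mem_toFinset.mpr ha) halt.le))
    obtain ⟨j, hjSI, hjmax⟩ := hSfin.toFinset.exists_maximal
      ⟨hSne.choose, hSfin.mem_toFinset.mpr hSne.choose_spec⟩
    rw [Set.Finite.mem_toFinset] at hjSI
    have hjmax' : ∀ x, (P x ∧ ∀ a b, P a → P b → a ⊔ b = x → a = x ∨ b = x) → ¬ j < x :=
      fun x hx hlt => lt_irrefl j (lt_of_lt_of_le hlt (hjmax (hSfin.mem_toFinset.mpr hx) hlt.le))
    have hPj : P j := hjSI.1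
    have hjt : j ≤ t := htop j hPj
    have hprime : ∀ a b, P a → P b → j ≤ a ⊔ b → j ≤ a ∨ j ≤ b := by
      intro a b ha hb hj
      have heq : (j ⊓ a) ⊔ (j ⊓ b) = j := by
        rw [← inf_sup_left]
        exact inf_eq_left.mpr hj
      rcases hjSI.2 _ _ (hinf j a hPj ha) (hinf j b hPj hb) heq with h | h
      · exact Or.inl (by rw [← h]; exact inf_le_right)
      · exact Or.inr (by rw [← h]; exact inf_le_right)
    by_cases hI : ∃ i, P i ∧ ¬ j ≤ i
    case neg =>
      push_neg at hI
      have hall : ∀ u, P u → u = j := by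
        intro u
        induction u using WellFoundedLT.induction with
        | ind u IHu =>
          intro hu
          by_contra hne
          have hju : j < u := lt_of_le_of_ne (hI u hu) fun h => hne h.symm
          have hnSI : ¬ (P u ∧ ∀ a b, P a → P b → a ⊔ b = u → a = u ∨ b = u) :=
            fun h => hjmax' u h hju
          push_neg at hnSI
          obtain ⟨a, b, hPa, hPb, hab, hna, hnb⟩ := hnSI hu
          have ha' : a = j := IHu a (lt_of_le_of_ne (hab ▸ (le_sup_left : a ≤ a ⊔ b)) hna) hPa
          have hb' : b = j := IHu b (lt_of_le_of_ne (hab ▸ (le_sup_right : b ≤ a ⊔ b)) hnb) hPb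
          exact hne (by rw [← hab, ha', hb', sup_idem])
      refine ⟨A, hAfg, le_rfl, hA, fun u v hu hv => ?_⟩
      rw [hall u hu, hall v hv, sup_idem, sup_idem]
    case pos =>
      obtain ⟨i₀, hPi₀, hji₀⟩ := hI
      have hfinI : {x | P x ∧ ¬ j ≤ x}.Finite := Set.toFinite _
      have hneI : hfinI.toFinset.Nonempty := ⟨i₀, hfinI.mem_toFinset.mpr ⟨hPi₀, hji₀⟩⟩
      set t' : D := hfinI.toFinset.sup' hneI id with ht'def
      have hPt' : P t' ∧ ¬ j ≤ t' := by
        rw [ht'def]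
        refine Finset.sup'_induction (p := fun z => P z ∧ ¬ j ≤ z) hneI id ?_ ?_
        · exact fun a ha b hb => ⟨hsup _ _ ha.1 hb.1,
            fun hc => (hprime _ _ ha.1 hb.1 hc).elim ha.2 hb.2⟩
        · intro b hb
          exact hfinI.mem_toFinset.mp hb
      have hle_t' : ∀ u, P u → ¬ j ≤ u → u ≤ t' := by
        intro u hu hju
        exact Finset.le_sup' (f := id) (hfinI.mem_toFinset.mpr ⟨hu, hju⟩)
      have ht't : t' ≤ t := htop t' hPt'.1
      -- decomposition claim
      have hC2 : ∀ u, P u → ∃ w, (P w ∧ ¬ j ≤ w) ∧ w ≤ u ∧ u ≤ w ⊔ j := by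
        intro u
        induction u using WellFoundedLT.induction with
        | ind u IHu =>
          intro hu
          by_cases hju : j ≤ u
          · by_cases huj : u = j
            · exact ⟨i₀ ⊓ j, ⟨hinf _ _ hPi₀ hPj,
                fun hc => hji₀ (hc.trans inf_le_left)⟩, huj ▸ inf_le_right,
                huj ▸ (le_sup_right : j ≤ i₀ ⊓ j ⊔ j)⟩
            · have hlt : j < u := lt_of_le_of_ne hju (Ne.symm huj)
              have hnSI : ¬ (P u ∧ ∀ a b, P a → P b → a ⊔ b = u → a = u ∨ b = u) :=
                fun h => hjmax' u h hlt
              push_neg at hnSI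
              obtain ⟨a, b, hPa, hPb, hab, hna, hnb⟩ := hnSI hu
              obtain ⟨wa, hwa, hwau, hawa⟩ :=
                IHu a (lt_of_le_of_ne (hab ▸ (le_sup_left : a ≤ a ⊔ b)) hna) hPa
              obtain ⟨wb, hwb, hwbu, hbwb⟩ :=
                IHu b (lt_of_le_of_ne (hab ▸ (le_sup_right : b ≤ a ⊔ b)) hnb) hPb
              refine ⟨wa ⊔ wb, ⟨hsup _ _ hwa.1 hwb.1,
                fun hc => (hprime _ _ hwa.1 hwb.1 hc).elim hwa.2 hwb.2⟩,
                sup_le (hwau.trans (hab ▸ (le_sup_left : a ≤ a ⊔ b)))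
                  (hwbu.trans (hab ▸ (le_sup_right : b ≤ a ⊔ b))), ?_⟩
              calc u = a ⊔ b := hab.symm
                _ ≤ (wa ⊔ j) ⊔ (wb ⊔ j) := sup_le_sup hawa hbwb
                _ = (wa ⊔ wb) ⊔ j := by rw [sup_sup_sup_comm, sup_idem]
          · exact ⟨u, ⟨hu, hju⟩, le_rfl, le_sup_left⟩
      have htt' : t = t' ⊔ j := by
        obtain ⟨w, hw, hwt, htw⟩ := hC2 t ht
        exact le_antisymm (htw.trans (sup_le_sup_right (hle_t' w hw.1 hw.2) j))
          (sup_le ht't hjt)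
      -- decompose generators of A
      obtain ⟨S, hSA⟩ := hAfg
      have hst : ∀ s : G, s ∈ (S : Set G) → s ∈ φ t' ⊔ φ j := by
        intro s hs
        have h1 : s ∈ A := hSA ▸ AddSubgroup.subset_closure hs
        have h2 : s ∈ φ t := hA h1
        rwa [htt', map_sup] at h2
      choose x hx y hy hxy using fun s : {a : G // a ∈ S} =>
        AddSubgroup.mem_sup.mp (hst s.1 s.2)
      set Bj : AddSubgroup G := AddSubgroup.closure (Set.range y) with hBjdef
      have hBjfg : Bj.FG := (AddSubgroup.fg_iff Bj).mpr
        ⟨Set.range y, rfl, Set.finite_range y⟩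
      have hBjle : Bj ≤ φ j := by
        rw [hBjdef, AddSubgroup.closure_le]
        rintro _ ⟨s, rfl⟩
        exact hy s
      set K : AddSubgroup G := Bj ⊓ φ (t' ⊓ j) with hKdef
      have hKfg : K.FG := fgOfLe hBjfg inf_le_left
      set AI : AddSubgroup G := AddSubgroup.closure (Set.range x) ⊔ K with hAIdef
      have hAIfg : AI.FG := fgSup
        ((AddSubgroup.fg_iff _).mpr ⟨Set.range x, rfl, Set.finite_range x⟩) hKfg
      have hAIle : AI ≤ φ t' := by
        rw [hAIdef]
        refine sup_le ?_ ?_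
        · rw [AddSubgroup.closure_le]
          rintro _ ⟨s, rfl⟩
          exact hx s
        · exact inf_le_right.trans (hmono inf_le_left)
      have hcard' : {x | P x ∧ ¬ j ≤ x}.ncard ≤ n := by
        have hss : {x | P x ∧ ¬ j ≤ x} ⊂ {x | P x} := by
          constructor
          · exact fun z hz => hz.1
          · intro hsub
            exact (hsub hPj).2 le_rfl
        have := Set.ncard_lt_ncard hss hfinP
        omega
      obtain ⟨BI, hBIfg, hAIBI, hBIle, hBIhom⟩ := IH (fun u => P u ∧ ¬ j ≤ u)
        (fun a b ha hb => ⟨hsup _ _ ha.1 hb.1,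
          fun hc => (hprime _ _ ha.1 hb.1 hc).elim ha.2 hb.2⟩)
        (fun a b ha hb => ⟨hinf _ _ ha.1 hb.1, fun hc => ha.2 (hc.trans inf_le_left)⟩)
        t' hPt' (fun u hu => hle_t' u hu.1 hu.2) hcard' φ AI hAIfg hAIle
      set B : AddSubgroup G := BI ⊔ Bj with hBdef
      have hBfg : B.FG := fgSup hBIfg hBjfg
      have hAB : A ≤ B := by
        rw [← hSA, AddSubgroup.closure_le]
        intro s hs
        have h1 : x ⟨s, hs⟩ + y ⟨s, hs⟩ = s := hxy ⟨s, hs⟩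
        have hxB : x ⟨s, hs⟩ ∈ B := by
          apply (le_sup_left : BI ≤ B)
          apply hAIBI
          exact (le_sup_left : AddSubgroup.closure (Set.range x) ≤ AI)
            (AddSubgroup.subset_closure ⟨⟨s, hs⟩, rfl⟩)
        have hyB : y ⟨s, hs⟩ ∈ B := by
          apply (le_sup_right : Bj ≤ B)
          exact AddSubgroup.subset_closure ⟨⟨s, hs⟩, rfl⟩
        show s ∈ B
        rw [← h1]
        exact add_mem hxB hyB
      have hBle : B ≤ φ t := sup_le (hBIle.trans (hmono ht't)) (hBjle.trans (hmono hjt))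
      -- key step 1 : B ⊓ φ t' ≤ BI
      have hS1 : ∀ g ∈ B, g ∈ φ t' → g ∈ BI := by
        intro g hgB hgt'
        obtain ⟨c, hc, z, hz, rfl⟩ := AddSubgroup.mem_sup.mp hgB
        have hzt' : z ∈ φ t' := by
          have := sub_mem hgt' (hBIle hc)
          simpa using this
        have hzK : z ∈ K := by
          refine AddSubgroup.mem_inf.mpr ⟨hz, ?_⟩
          rw [map_inf]
          exact AddSubgroup.mem_inf.mpr ⟨hzt', hBjle hz⟩
        have hzBI : z ∈ BI := hAIBI ((le_sup_right : K ≤ AI) hzK)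
        exact add_mem hc hzBI
      have hS2 : ∀ w, P w → ¬ j ≤ w → B ⊓ φ w = BI ⊓ φ w := by
        intro w hw hjw
        refine le_antisymm ?_ (inf_le_inf_right _ le_sup_left)
        intro g hg
        obtain ⟨hgB, hgw⟩ := AddSubgroup.mem_inf.mp hg
        exact AddSubgroup.mem_inf.mpr ⟨hS1 g hgB (hmono (hle_t' w hw hjw) hgw), hgw⟩
      have hPj' : P (t' ⊓ j) ∧ ¬ j ≤ t' ⊓ j :=
        ⟨hinf _ _ hPt'.1 hPj, fun hc => hPt'.2 (hc.trans inf_le_left)⟩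
      -- key step 2
      have hL2 : ∀ w, P w → ¬ j ≤ w → B ⊓ φ (w ⊔ j) ≤ (B ⊓ φ w) ⊔ (B ⊓ φ j) := by
        intro w hPw hjw g hg
        obtain ⟨hgB, hgwj⟩ := AddSubgroup.mem_inf.mp hg
        obtain ⟨c, hc, z, hz, rfl⟩ := AddSubgroup.mem_sup.mp hgB
        have hzj : z ∈ φ j := hBjle hz
        have hc1 : c ∈ φ (w ⊔ j) := by
          have hzj' : z ∈ φ (w ⊔ j) := hmono (le_sup_right : j ≤ w ⊔ j) hzj
          have := sub_mem hgwj hzj'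
          simpa using this
        have hc2 : c ∈ φ t' := hBIle hc
        have hcw : c ∈ φ (w ⊔ (t' ⊓ j)) := by
          have heq : (w ⊔ j) ⊓ t' = w ⊔ (t' ⊓ j) := by
            rw [inf_comm, inf_sup_left, inf_eq_right.mpr (hle_t' w hPw hjw)]
          rw [← heq, map_inf]
          exact AddSubgroup.mem_inf.mpr ⟨hc1, hc2⟩
        have hhom := hBIhom w (t' ⊓ j) ⟨hPw, hjw⟩ hPj'
        have hcmem : c ∈ (BI ⊓ φ w) ⊔ (BI ⊓ φ (t' ⊓ j)) := by
          rw [← hhom]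
          exact AddSubgroup.mem_inf.mpr ⟨hc, hcw⟩
        have hcle : (BI ⊓ φ w) ⊔ (BI ⊓ φ (t' ⊓ j)) ≤ (B ⊓ φ w) ⊔ (B ⊓ φ j) :=
          sup_le_sup (inf_le_inf_right _ le_sup_left)
            (inf_le_inf (le_sup_left : BI ≤ B) (hmono inf_le_right))
        refine add_mem (hcle hcmem) ?_
        exact (le_sup_right : B ⊓ φ j ≤ (B ⊓ φ w) ⊔ (B ⊓ φ j))
          (AddSubgroup.mem_inf.mpr ⟨(le_sup_right : Bj ≤ B) hz, hzj⟩)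
      -- main inequality
      have hmain : ∀ u v, P u → P v → B ⊓ φ (u ⊔ v) ≤ (B ⊓ φ u) ⊔ (B ⊓ φ v) := by
        intro u v hu hv
        obtain ⟨wu, hwu, hwuu, huwu⟩ := hC2 u hu
        obtain ⟨wv, hwv, hwvv, hvwv⟩ := hC2 v hv
        by_cases hcase : j ≤ u ∨ j ≤ v
        · have hw : P (wu ⊔ wv) ∧ ¬ j ≤ wu ⊔ wv := ⟨hsup _ _ hwu.1 hwv.1,
            fun hc => (hprime _ _ hwu.1 hwv.1 hc).elim hwu.2 hwv.2⟩
          have huv : u ⊔ v ≤ (wu ⊔ wv) ⊔ j := by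
            refine sup_le (huwu.trans ?_) (hvwv.trans ?_)
            · exact sup_le_sup_right le_sup_left j
            · exact sup_le_sup_right le_sup_right j
          have hBj_le : B ⊓ φ j ≤ (B ⊓ φ u) ⊔ (B ⊓ φ v) := by
            rcases hcase with hcj | hcj
            · exact (inf_le_inf_left _ (hmono hcj)).trans le_sup_left
            · exact (inf_le_inf_left _ (hmono hcj)).trans le_sup_right
          calc B ⊓ φ (u ⊔ v) ≤ B ⊓ φ ((wu ⊔ wv) ⊔ j) := inf_le_inf_left _ (hmono huv)
            _ ≤ (B ⊓ φ (wu ⊔ wv)) ⊔ (B ⊓ φ j) := hL2 _ hw.1 hw.2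
            _ ≤ ((B ⊓ φ u) ⊔ (B ⊓ φ v)) ⊔ (B ⊓ φ j) := by
                apply sup_le_sup_right
                rw [hS2 _ hw.1 hw.2, hBIhom wu wv hwu hwv]
                exact sup_le_sup
                  ((inf_le_inf (le_sup_left : BI ≤ B) (hmono hwuu)))
                  ((inf_le_inf (le_sup_left : BI ≤ B) (hmono hwvv)))
            _ ≤ (B ⊓ φ u) ⊔ (B ⊓ φ v) := sup_le le_rfl hBj_le
        · push_neg at hcase
          have huv' : P (u ⊔ v) ∧ ¬ j ≤ u ⊔ v := ⟨hsup _ _ hu hv,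
            fun hc => (hprime _ _ hu hv hc).elim hcase.1 hcase.2⟩
          rw [hS2 (u ⊔ v) huv'.1 huv'.2, hBIhom u v ⟨hu, hcase.1⟩ ⟨hv, hcase.2⟩]
          exact sup_le_sup (inf_le_inf_right _ le_sup_left)
            (inf_le_inf_right _ le_sup_left)
      refine ⟨B, hBfg, hAB, hBle, fun u v hu hv => le_antisymm (hmain u v hu hv) ?_⟩
      exact sup_le (inf_le_inf_left _ (hmono le_sup_left))
        (inf_le_inf_left _ (hmono le_sup_right))

/-- Every finitely generated subgroup of `φ ⊤` is contained in a finitely generated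
subgroup `B` of `φ ⊤` that is distributive with respect to `φ`. -/
theorem stmt2 {G D : Type*} [AddCommGroup G] [DistribLattice D] [Fintype D] [OrderTop D]
    (φ : LatticeHom D (AddSubgroup G))
    (A : AddSubgroup G) (hAfg : A.FG) (hA : A ≤ φ ⊤) :
    ∃ B : AddSubgroup G, B.FG ∧ A ≤ B ∧ B ≤ φ ⊤ ∧
      ∃ ψ : LatticeHom D (AddSubgroup G), ∀ u : D, ψ u = B ⊓ φ u := by
  obtain ⟨B, hfg, hAB, hBle, hhom⟩ := key (Nat.card D) (fun _ : D => True)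
    (fun _ _ _ _ => trivial) (fun _ _ _ _ => trivial) ⊤ trivial (fun u _ => le_top)
    (by rw [Set.setOf_true, Set.ncard_univ]) φ A hAfg hA
  refine ⟨B, hfg, hAB, hBle,
    ⟨⟨⟨fun u => B ⊓ φ u, fun u v => hhom u v trivial trivial⟩, fun u v => ?_⟩,
      fun u => rfl⟩⟩
  show B ⊓ φ (u ⊓ v) = (B ⊓ φ u) ⊓ (B ⊓ φ v)
  rw [map_inf, inf_inf_distrib_left]
end

section
/- Let D be a finite distributive lattice, let M be a compactly noetherian modular lattice, and let φ : D → M be a lattice homomorphism. Then every compact element of M below φ(1) lies below some compact element b ≤ φ(1) of M such that the map D → M, u ↦ b ∧ φ(u), is a lattice homomorphism. -/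
open CompleteLattice Finset

section Aux

variable {M : Type*} [CompleteLattice M]

private lemma compact_sup' {a b : M} (ha : IsCompactElement a) (hb : IsCompactElement b) :
    IsCompactElement (a ⊔ b) := by
  classical
  rw [isCompactElement_iff_exists_le_sSup_of_le_sSup] at ha hb ⊢
  intro s hs
  obtain ⟨t1, ht1, hat⟩ := ha s (le_trans le_sup_left hs)
  obtain ⟨t2, ht2, hbt⟩ := hb s (le_trans le_sup_right hs)
  refine ⟨t1 ∪ t2, ?_, ?_⟩
  · rw [Finset.coe_union]
    exact Set.union_subset ht1 ht2
  · rw [Finset.sup_union]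
    exact sup_le (hat.trans le_sup_left) (hbt.trans le_sup_right)

private lemma cover_lemma {ι : Type*} [IsCompactlyGenerated M] (s : Finset ι) (y : ι → M) (a : M)
    (ha : IsCompactElement a) (h : a ≤ s.sup y) :
    ∃ c : ι → M, (∀ i, IsCompactElement (c i)) ∧ (∀ i, c i ≤ y i) ∧ a ≤ s.sup c := by
  classical
  set K : ι → Set M := fun i => {k : M | IsCompactElement k ∧ k ≤ y i} with hK
  have hsup : s.sup y ≤ sSup (⋃ i ∈ (s : Set ι), K i) := by
    refine Finset.sup_le fun i hi => ?_
    conv_lhs => rw [← sSup_compact_le_eq (y i)]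
    refine sSup_le_sSup ?_
    intro z hz
    simp only [Set.mem_iUnion]
    exact ⟨i, hi, hz⟩
  obtain ⟨t, hts, hat⟩ := (isCompactElement_iff_exists_le_sSup_of_le_sSup (k := a)).1 ha _ (h.trans hsup)
  refine ⟨fun i => (t.filter (fun z => z ∈ K i)).sup id, fun i => ?_, fun i => ?_, ?_⟩
  · refine isCompactElement_finsetSup _ fun z hz => ?_
    have hz' := hts (Finset.mem_filter.1 hz).1
    simp only [Set.mem_iUnion] at hz'
    obtain ⟨j, _, hj⟩ := hz'
    exact hj.1
  · exact Finset.sup_le fun z hz => ((Finset.mem_filter.1 hz).2).2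
  · refine hat.trans (Finset.sup_le fun z hz => ?_)
    have hz' := hts hz
    simp only [Set.mem_iUnion] at hz'
    obtain ⟨j, hjs, hj⟩ := hz'
    calc (id z : M) ≤ (t.filter (fun z => z ∈ K j)).sup id :=
          Finset.le_sup (Finset.mem_filter.2 ⟨hz, hj⟩)
    _ ≤ s.sup (fun i => (t.filter (fun z => z ∈ K i)).sup id) :=
          Finset.le_sup (f := fun i => (t.filter (fun z => z ∈ K i)).sup id) hjs

private lemma core {D : Type*} [DistribLattice D] [Fintype D] [OrderBot D]
    [DecidableEq D] [@DecidableRel D D (· ≤ ·)]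
    [IsModularLattice M] [IsCompactlyGenerated M]
    (hnoeth : ∀ a b : M, IsCompactElement b → a ≤ b → IsCompactElement a)
    (φ : LatticeHom D M) :
    ∀ (n : ℕ) (Q : Finset D), Q.card ≤ n → (∀ p ∈ Q, SupPrime p) →
      (∀ q : D, SupIrred q → q ≤ Q.sup id → q ∈ Q) →
      ∀ a : M, IsCompactElement a → a ≤ φ (Q.sup id) →
      ∃ (x : D → M) (x0 : M), IsCompactElement x0 ∧ x0 ≤ φ ⊥ ∧
        (∀ p ∈ Q, IsCompactElement (x p) ∧ x p ≤ φ p) ∧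
        a ≤ x0 ⊔ Q.sup x ∧
        ∀ u, u ≤ Q.sup id → (x0 ⊔ Q.sup x) ⊓ φ u ≤ x0 ⊔ (Q.filter (· ≤ u)).sup x := by
  classical
  have hmono : Monotone φ := OrderHomClass.mono φ
  have hempty : ∀ a : M, IsCompactElement a → a ≤ φ ((∅ : Finset D).sup id) →
      ∃ (x : D → M) (x0 : M), IsCompactElement x0 ∧ x0 ≤ φ ⊥ ∧
        (∀ p ∈ (∅ : Finset D), IsCompactElement (x p) ∧ x p ≤ φ p) ∧
        a ≤ x0 ⊔ (∅ : Finset D).sup x ∧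
        ∀ u, u ≤ (∅ : Finset D).sup id →
          (x0 ⊔ (∅ : Finset D).sup x) ⊓ φ u ≤ x0 ⊔ ((∅ : Finset D).filter (· ≤ u)).sup x := by
    intro a ha haw
    refine ⟨fun _ => ⊥, a, ha, by simpa using haw, by simp, le_sup_left, fun u hu => ?_⟩
    simp only [Finset.filter_empty]
    exact inf_le_left
  intro n
  induction n with
  | zero =>
    intro Q hcard _ _ a ha haw
    have hQ : Q = ∅ := Finset.card_eq_zero.1 (Nat.le_zero.1 hcard)
    subst hQ
    exact hempty a ha haw
  | succ n ih =>
    intro Q hcard hQ1 hQ2 a ha haw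
    rcases Q.eq_empty_or_nonempty with rfl | hQne
    · exact hempty a ha haw
    set w := Q.sup id with hw
    set pred : D → Prop := fun p => ∃ q ∈ Q, p < q with hpred
    set Qr := Q.filter pred with hQr
    set Qm := Q.filter (fun p => ¬ pred p) with hQm
    have hsplit : Qr ∪ Qm = Q := Finset.filter_union_filter_not_eq pred Q
    have hQrQ : Qr ⊆ Q := Finset.filter_subset _ _
    have hQmQ : Qm ⊆ Q := Finset.filter_subset _ _
    obtain ⟨m, hmQ, hmmax⟩ := Q.exists_maximal hQne
    have hmQr : m ∉ Qr := by
      intro hc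
      obtain ⟨q, hq, hlt⟩ := (Finset.mem_filter.1 hc).2
      exact hlt.not_ge (hmmax hq hlt.le)
    have hcardr : Qr.card ≤ n := by
      have hss : Qr ⊂ Q := (Finset.ssubset_iff_of_subset hQrQ).2 ⟨m, hmQ, hmQr⟩
      have := Finset.card_lt_card hss
      omega
    have hQ1r : ∀ p ∈ Qr, SupPrime p := fun p hp => hQ1 p (hQrQ hp)
    set wr := Qr.sup id with hwr
    have hwrw : wr ≤ w := Finset.sup_mono hQrQ
    have hQ2r : ∀ q : D, SupIrred q → q ≤ Qr.sup id → q ∈ Qr := by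
      intro q hq hqwr
      have hqQ : q ∈ Q := hQ2 q hq (hqwr.trans hwrw)
      obtain ⟨p, hpQr, hqp⟩ := ((hQ1 q hqQ).le_finset_sup).1 hqwr
      rcases eq_or_lt_of_le hqp with rfl | hlt
      · exact hpQr
      · exact Finset.mem_filter.2 ⟨hqQ, ⟨p, hQrQ hpQr, hlt⟩⟩
    -- cover a by compacts below the φ p
    have haw' : a ≤ Q.sup (fun p => φ p) := by
      have h1 : φ w = Q.sup' hQne (fun p => φ p) := by
        rw [hw, ← Finset.sup'_eq_sup hQne id, map_finset_sup' φ hQne id]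
        rfl
      calc a ≤ φ w := haw
      _ = Q.sup' hQne (fun p => φ p) := h1
      _ = Q.sup (fun p => φ p) := Finset.sup'_eq_sup hQne _
    obtain ⟨c, hcc, hcy, hacov⟩ := cover_lemma Q (fun p => φ p) a ha haw'
    set T := Qm.sup c with hT
    have hTc : IsCompactElement T := isCompactElement_finsetSup _ fun p _ => hcc p
    set g := T ⊓ φ wr with hg
    have hgc : IsCompactElement g := hnoeth _ _ hTc inf_le_left
    set a1 := g ⊔ Qr.sup c with ha1
    have ha1c : IsCompactElement a1 :=
      compact_sup' hgc (isCompactElement_finsetSup _ fun p _ => hcc p)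
    have ha1wr : a1 ≤ φ wr := by
      refine sup_le inf_le_right (Finset.sup_le fun p hp => ?_)
      exact (hcy p).trans (hmono (Finset.le_sup (f := id) hp))
    obtain ⟨x1, x0, hx0c, hx0le, hx1, hcov1, hcond1⟩ := ih Qr hcardr hQ1r hQ2r a1 ha1c ha1wr
    set x : D → M := fun p => if p ∈ Qm then c p else x1 p with hxdef
    have hxQm : ∀ p ∈ Qm, x p = c p := fun p hp => if_pos hp
    have hxQr : ∀ p ∈ Qr, x p = x1 p := by
      intro p hp
      have hnot : p ∉ Qm := by
        intro hc
        exact (Finset.mem_filter.1 hc).2 (Finset.mem_filter.1 hp).2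
      exact if_neg hnot
    set b1 := x0 ⊔ Qr.sup x1 with hb1
    have hQrsup : Qr.sup x = Qr.sup x1 := Finset.sup_congr rfl hxQr
    have hQmsup : Qm.sup x = T := Finset.sup_congr rfl hxQm
    have hbeq : x0 ⊔ Q.sup x = T ⊔ b1 := by
      rw [← hsplit, Finset.sup_union, hQrsup, hQmsup, hb1]
      rw [sup_comm (Qr.sup x1) T, ← sup_assoc, sup_comm x0 T, sup_assoc]
    have hxprop : ∀ p ∈ Q, IsCompactElement (x p) ∧ x p ≤ φ p := by
      intro p hp
      by_cases hpm : p ∈ Qm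
      · rw [hxQm p hpm]; exact ⟨hcc p, hcy p⟩
      · have hpr : p ∈ Qr := by
          rw [← hsplit] at hp
          rcases Finset.mem_union.1 hp with h | h
          · exact h
          · exact absurd h hpm
        rw [hxQr p hpr]; exact hx1 p hpr
    have hxle : ∀ p ∈ Q, x p ≤ φ p := fun p hp => (hxprop p hp).2
    have hcov : a ≤ x0 ⊔ Q.sup x := by
      rw [hbeq]
      refine hacov.trans ?_
      rw [← hsplit, Finset.sup_union]
      refine sup_le (le_trans ?_ le_sup_right) (le_sup_left : T ≤ T ⊔ b1)
      exact le_trans (le_sup_right : Qr.sup c ≤ g ⊔ Qr.sup c) hcov1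
    refine ⟨x, x0, hx0c, hx0le, hxprop, hcov, ?_⟩
    intro u
    induction u using WellFoundedLT.induction with
    | ind u ihu =>
    intro hu
    rw [hbeq]
    by_cases huw : u ≤ wr
    · -- direct case: interference of T is killed by modularity
      have hb1wr : b1 ≤ φ wr := by
        refine sup_le (hx0le.trans (hmono bot_le)) (Finset.sup_le fun p hp => ?_)
        exact (hx1 p hp).2.trans (hmono (Finset.le_sup (f := id) hp))
      have hint : T ⊓ (b1 ⊔ φ u) ≤ b1 := by
        have h1 : b1 ⊔ φ u ≤ φ wr := sup_le hb1wr (hmono huw)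
        calc T ⊓ (b1 ⊔ φ u) ≤ T ⊓ φ wr := inf_le_inf_left T h1
        _ = g := hg.symm
        _ ≤ a1 := le_sup_left
        _ ≤ b1 := hcov1
      have hkey : (T ⊔ b1) ⊓ (b1 ⊔ φ u) = b1 := by
        rw [sup_comm T b1, sup_inf_assoc_of_le _ (le_sup_left : b1 ≤ b1 ⊔ φ u)]
        exact sup_eq_left.2 hint
      calc (T ⊔ b1) ⊓ φ u ≤ ((T ⊔ b1) ⊓ (b1 ⊔ φ u)) ⊓ φ u := by
            exact le_inf (le_inf inf_le_left (inf_le_right.trans le_sup_right)) inf_le_right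
      _ = b1 ⊓ φ u := by rw [hkey]
      _ ≤ x0 ⊔ (Qr.filter (· ≤ u)).sup x1 := hcond1 u huw
      _ ≤ x0 ⊔ (Q.filter (· ≤ u)).sup x := by
          refine sup_le le_sup_left (le_trans ?_ le_sup_right)
          have he : (Qr.filter (· ≤ u)).sup x1 = (Qr.filter (· ≤ u)).sup x :=
            Finset.sup_congr rfl fun p hp => (hxQr p (Finset.mem_of_mem_filter p hp)).symm
          rw [he]
          exact Finset.sup_mono (Finset.filter_subset_filter _ hQrQ)
    · -- reduction case
      set u' := (Q.filter (fun p => ¬ p ≤ u)).sup id with hu'def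
      by_cases huu' : u ≤ u'
      · exfalso
        apply huw
        obtain ⟨s, hsup, hirr⟩ := exists_supIrred_decomposition u
        rw [← hsup]
        refine Finset.sup_le fun q hq => ?_
        have hqu : q ≤ u := hsup ▸ Finset.le_sup (f := id) hq
        have hqQ : q ∈ Q := hQ2 q (hirr hq) (hqu.trans hu)
        obtain ⟨p, hpf, hqp⟩ := ((hQ1 q hqQ).le_finset_sup).1 (hqu.trans huu')
        have hpQ : p ∈ Q := Finset.mem_of_mem_filter p hpf
        have hpu : ¬ p ≤ u := (Finset.mem_filter.1 hpf).2
        have hlt : q < p := lt_of_le_of_ne hqp (by rintro rfl; exact hpu hqu)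
        exact Finset.le_sup (f := id) (Finset.mem_filter.2 ⟨hqQ, ⟨p, hpQ, hlt⟩⟩)
      · set v := u ⊓ u' with hvdef
        have hvu : v < u := lt_of_le_of_ne inf_le_left (fun h => huu' (h ▸ inf_le_right))
        set su := x0 ⊔ (Q.filter (· ≤ u)).sup x with hsudef
        set tu := (Q.filter (fun p => ¬ p ≤ u)).sup x with htudef
        have hsu_le : su ≤ φ u := by
          refine sup_le (hx0le.trans (hmono bot_le)) (Finset.sup_le fun p hp => ?_)
          exact (hxle p (Finset.mem_of_mem_filter p hp)).trans (hmono (Finset.mem_filter.1 hp).2)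
        have hsupsplit : Q.sup x = (Q.filter (· ≤ u)).sup x ⊔ (Q.filter (fun p => ¬ p ≤ u)).sup x := by
          conv_lhs => rw [← Finset.filter_union_filter_not_eq (· ≤ u) Q]
          exact Finset.sup_union
        have hbdec : T ⊔ b1 = su ⊔ tu := by
          rw [← hbeq, hsudef, htudef, hsupsplit, ← sup_assoc]
        have htu_le : tu ≤ φ u' := by
          refine Finset.sup_le fun p hp => ?_
          exact (hxle p (Finset.mem_of_mem_filter p hp)).trans
            (hmono (Finset.le_sup (f := id) hp))
        have h2 : tu ⊓ φ u ≤ (T ⊔ b1) ⊓ φ v := by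
          refine le_inf ?_ ?_
          · exact inf_le_left.trans (by rw [hbdec]; exact le_sup_right)
          · calc tu ⊓ φ u ≤ φ u' ⊓ φ u := inf_le_inf_right _ htu_le
            _ = φ (u' ⊓ u) := (map_inf φ u' u).symm
            _ = φ v := by rw [hvdef, inf_comm]
        have h3 := ihu v hvu (le_trans inf_le_left hu)
        rw [hbeq] at h3
        have h4 : (T ⊔ b1) ⊓ φ v ≤ su := by
          refine h3.trans (sup_le le_sup_left (le_trans ?_ le_sup_right))
          refine Finset.sup_mono (Finset.monotone_filter_right Q ?_)
          intro p _ hp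
          exact hp.trans inf_le_left
        calc (T ⊔ b1) ⊓ φ u = su ⊔ (tu ⊓ φ u) := by
              rw [hbdec, sup_inf_assoc_of_le _ hsu_le]
        _ ≤ su ⊔ su := sup_le_sup le_rfl (h2.trans h4)
        _ = su := sup_idem su

end Aux

/-- Theorem 4.2′: in a compactly noetherian modular lattice `M`, every compact element
below `φ ⊤` lies below a compact element `b ≤ φ ⊤` such that `u ↦ b ⊓ φ u` is a
lattice homomorphism. -/
theorem stmt3 {D M : Type*} [DistribLattice D] [Fintype D] [OrderTop D]
    [CompleteLattice M] [IsModularLattice M] [IsCompactlyGenerated M]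
    (hnoeth : ∀ a b : M, IsCompactElement b → a ≤ b → IsCompactElement a)
    (φ : LatticeHom D M) (a : M) (ha : IsCompactElement a) (ha1 : a ≤ φ ⊤) :
    ∃ b : M, IsCompactElement b ∧ a ≤ b ∧ b ≤ φ ⊤ ∧
      ∃ ψ : LatticeHom D M, ∀ u : D, ψ u = b ⊓ φ u := by
  classical
  letI : DecidableEq D := Classical.decEq D
  letI : @DecidableRel D D (· ≤ ·) := fun _ _ => Classical.dec _
  haveI : OrderBot D :=
    { bot := Finset.univ.inf' ⟨⊤, Finset.mem_univ ⊤⟩ id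
      bot_le := fun a => Finset.inf'_le id (Finset.mem_univ a) }
  have hmono : Monotone φ := OrderHomClass.mono φ
  set J := Finset.univ.filter (fun q : D => SupIrred q) with hJ
  have htop : (⊤ : D) ≤ J.sup id := by
    obtain ⟨s, hsup, hirr⟩ := exists_supIrred_decomposition (⊤ : D)
    rw [← hsup]
    exact Finset.sup_mono (fun q hq => Finset.mem_filter.2 ⟨Finset.mem_univ q, hirr hq⟩)
  obtain ⟨x, x0, hx0c, hx0le, hx, hcov, hcond⟩ :=
    core hnoeth φ J.card J le_rfl (fun p hp => ((Finset.mem_filter.1 hp).2).supPrime)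
      (fun q hq _ => Finset.mem_filter.2 ⟨Finset.mem_univ q, hq⟩) a ha (ha1.trans (hmono htop))
  set b := x0 ⊔ J.sup x with hb
  have hbc : IsCompactElement b :=
    compact_sup' hx0c (isCompactElement_finsetSup _ fun p hp => (hx p hp).1)
  have hble : b ≤ φ ⊤ :=
    sup_le (hx0le.trans (hmono bot_le)) (Finset.sup_le fun p hp => (hx p hp).2.trans (hmono le_top))
  have hxb : ∀ p ∈ J, x p ≤ b := fun p hp => (Finset.le_sup hp).trans le_sup_right
  have hx0b : x0 ≤ b := le_sup_left
  have hsup' : ∀ u v : D, b ⊓ φ (u ⊔ v) = (b ⊓ φ u) ⊔ (b ⊓ φ v) := by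
    intro u v
    refine le_antisymm ?_
      (sup_le (inf_le_inf_left b (hmono le_sup_left)) (inf_le_inf_left b (hmono le_sup_right)))
    refine (hcond (u ⊔ v) (le_top.trans htop)).trans ?_
    refine sup_le (le_trans (le_inf hx0b (hx0le.trans (hmono bot_le))) le_sup_left) ?_
    refine Finset.sup_le fun p hp => ?_
    have hpJ : p ∈ J := Finset.mem_of_mem_filter p hp
    have hprime : SupPrime p := ((Finset.mem_filter.1 hpJ).2).supPrime
    rcases hprime.2 (Finset.mem_filter.1 hp).2 with h | h
    · exact le_trans (le_inf (hxb p hpJ) ((hx p hpJ).2.trans (hmono h))) le_sup_left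
    · exact le_trans (le_inf (hxb p hpJ) ((hx p hpJ).2.trans (hmono h))) le_sup_right
  have hinf' : ∀ u v : D, b ⊓ φ (u ⊓ v) = (b ⊓ φ u) ⊓ (b ⊓ φ v) := by
    intro u v
    rw [map_inf, inf_inf_distrib_left]
  exact ⟨b, hbc, hcov, hble,
    ⟨{ toSupHom := ⟨fun u => b ⊓ φ u, fun u v => hsup' u v⟩,
       map_inf' := fun u v => hinf' u v }, fun _ => rfl⟩⟩
end

section
/- Let D be a lattice, G an abelian group, and φ : D → Sub(G), u ↦ G_u, a lattice homomorphism such that u ≤ v implies G_u is a pure subgroup of G_v. Then for every positive integer m, the map D → Sub(G[m]) sending u to G_u[m] = {x ∈ G_u : mx = 0} is a lattice homomorphism, and u ≤ v implies G_u[m] is a pure subgroup of G_v[m]. -/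
/-- `A` is a pure subgroup of `B`. -/
def IsPureIn {G : Type*} [AddCommGroup G] (A B : AddSubgroup G) : Prop :=
  A ≤ B ∧ ∀ (n : ℕ) (b : G), b ∈ B → n • b ∈ A → ∃ a ∈ A, n • a = n • b

/-- The subgroup `G[m] = {x : m • x = 0}` of an abelian group. -/
def mTorsion (G : Type*) [AddCommGroup G] (m : ℕ) : AddSubgroup G where
  carrier := {x : G | m • x = 0}
  zero_mem' := by simp
  add_mem' := by intro a b ha hb; simp only [Set.mem_setOf_eq, smul_add] at *; rw [ha, hb, add_zero]
  neg_mem' := by intro a ha; simp only [Set.mem_setOf_eq, smul_neg] at *; rw [ha, neg_zero]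

lemma mem_mTorsion {G : Type*} [AddCommGroup G] {m : ℕ} {x : G} :
    x ∈ mTorsion G m ↔ m • x = 0 := Iff.rfl

/-- Purity is inherited by `m`-torsion parts. -/
lemma isPureIn_torsion {G : Type*} [AddCommGroup G] {A B : AddSubgroup G} {m : ℕ}
    (h : IsPureIn A B) : IsPureIn (A ⊓ mTorsion G m) (B ⊓ mTorsion G m) := by
  constructor
  · exact inf_le_inf_right _ h.1
  · rintro n b ⟨hbB, hbT⟩ ⟨hnbA, -⟩
    have hbT' : m • b = 0 := hbT
    set g := Nat.gcd n m with hg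
    -- `g • b ∈ A` via Bézout
    have hgb : g • b ∈ A := by
      have hbez : (g : ℤ) = n * Nat.gcdA n m + m * Nat.gcdB n m := Nat.gcd_eq_gcd_ab n m
      have h1 : (g : ℤ) • b = Nat.gcdA n m • ((n : ℤ) • b) + Nat.gcdB n m • ((m : ℤ) • b) := by
        rw [hbez, add_smul, mul_comm ((n : ℤ)), mul_smul, mul_comm ((m : ℤ)), mul_smul]
      have h2 : (g : ℤ) • b = Nat.gcdA n m • (n • b) := by
        rw [h1, natCast_zsmul, natCast_zsmul, hbT', smul_zero, add_zero]
      have : (g : ℤ) • b ∈ A := h2 ▸ A.zsmul_mem hnbA _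
      rwa [natCast_zsmul] at this
    obtain ⟨n', hn'⟩ := Nat.gcd_dvd_left n m
    obtain ⟨m', hm'⟩ := Nat.gcd_dvd_right n m
    obtain ⟨a, haA, hga⟩ := h.2 g b hbB hgb
    refine ⟨a, ⟨haA, ?_⟩, ?_⟩
    · show m • a = 0
      calc m • a = m' • (g • a) := by rw [hm', mul_comm, mul_smul]
        _ = m' • (g • b) := by rw [hga]
        _ = m • b := by rw [← mul_smul, ← mul_comm, ← hm']
        _ = 0 := hbT'
    · calc n • a = n' • (g • a) := by rw [hn', mul_comm, mul_smul]
        _ = n' • (g • b) := by rw [hga]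
        _ = n • b := by rw [← mul_smul, ← mul_comm, ← hn']

/-- If `φ` is a lattice homomorphism satisfying the purity condition, then so is
`u ↦ φ u ⊓ G[m]` (with values in subgroups of `G[m]`). -/
theorem stmt5 {D G : Type*} [Lattice D] [AddCommGroup G]
    (φ : LatticeHom D (AddSubgroup G))
    (hpure : ∀ u v : D, u ≤ v → IsPureIn (φ u) (φ v))
    (m : ℕ) (hm : 0 < m) :
    (∃ ψ : LatticeHom D (AddSubgroup G),
        (∀ u : D, ψ u = φ u ⊓ mTorsion G m) ∧
        ∀ u v : D, u ≤ v → IsPureIn (ψ u) (ψ v)) := by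
  refine ⟨{ toFun := fun u => φ u ⊓ mTorsion G m, map_sup' := ?_, map_inf' := ?_ },
      fun u => rfl, ?_⟩
  · intro u v
    apply le_antisymm
    · rintro x ⟨hx, hxT⟩
      have hxT' : m • x = 0 := hxT
      rw [map_sup φ] at hx
      obtain ⟨y, hy, z, hz, hyz⟩ := AddSubgroup.mem_sup.mp hx
      -- `m • z ∈ φ (u ⊓ v)`
      have hmz : m • z ∈ φ (u ⊓ v) := by
        rw [map_inf φ]
        refine ⟨?_, (φ v).nsmul_mem hz m⟩
        have : m • z = -(m • y) := by
          have := congrArg (m • ·) hyz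
          simp only [smul_add] at this
          rw [hxT'] at this
          linear_combination (norm := abel) this
        rw [this]
        exact (φ u).neg_mem ((φ u).nsmul_mem hy m)
      have hzuv : z ∈ φ (u ⊔ v) := by
        rw [map_sup φ]; exact AddSubgroup.mem_sup_right hz
      obtain ⟨c, hc, hmc⟩ := (hpure (u ⊓ v) (u ⊔ v) (inf_le_sup)).2 m z hzuv hmz
      have hcu : c ∈ φ u := by rw [map_inf φ] at hc; exact hc.1
      have hcv : c ∈ φ v := by rw [map_inf φ] at hc; exact hc.2
      have hx1 : y + c ∈ φ u ⊓ mTorsion G m := by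
        refine ⟨(φ u).add_mem hy hcu, ?_⟩
        show m • (y + c) = 0
        rw [smul_add, hmc]
        calc m • y + m • z = m • (y + z) := (smul_add m y z).symm
          _ = m • x := by rw [hyz]
          _ = 0 := hxT'
      have hx2 : z - c ∈ φ v ⊓ mTorsion G m := by
        refine ⟨(φ v).sub_mem hz hcv, ?_⟩
        show m • (z - c) = 0
        rw [smul_sub, hmc, sub_self]
      have : x = (y + c) + (z - c) := by rw [← hyz]; abel
      rw [this]
      exact AddSubgroup.add_mem_sup hx1 hx2
    · exact sup_le (inf_le_inf_right _ (le_sup_left.trans_eq (map_sup φ u v).symm))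
        (inf_le_inf_right _ (le_sup_right.trans_eq (map_sup φ u v).symm))
  · intro u v
    show φ (u ⊓ v) ⊓ mTorsion G m = _
    rw [map_inf φ, inf_inf_distrib_right]
  · intro u v huv
    exact isPureIn_torsion (hpure u v huv)
end

section
/- Let D be a lattice, G an abelian group, and φ : D → Sub(G), u ↦ G_u, a lattice homomorphism satisfying the purity condition. Then the map u ↦ T(G_u), assigning to u the torsion subgroup of G_u, is a lattice homomorphism from D to Sub(T(G)) satisfying the purity condition. -/
lemma mem_torsion_iff' {G : Type*} [AddCommGroup G] (x : G) :
    x ∈ AddCommGroup.torsion G ↔ ∃ n : ℕ, 0 < n ∧ n • x = 0 := by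
  rw [AddCommGroup.mem_torsion, isOfFinAddOrder_iff_nsmul_eq_zero]

/-- If `φ : D → Sub G` is a lattice homomorphism satisfying the purity condition, then
`u ↦ T(φ u)` (torsion subgroups) is a lattice homomorphism satisfying the purity
condition, with values inside the torsion subgroup `T(G)`. -/
theorem stmt6 {D G : Type*} [Lattice D] [AddCommGroup G]
    (φ : LatticeHom D (AddSubgroup G))
    (hpure : ∀ u v : D, u ≤ v → IsPureIn (φ u) (φ v)) :
    ∃ ψ : LatticeHom D (AddSubgroup G),
      (∀ u : D, ψ u = φ u ⊓ AddCommGroup.torsion G) ∧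
      (∀ u : D, ψ u ≤ AddCommGroup.torsion G) ∧
      ∀ u v : D, u ≤ v → IsPureIn (ψ u) (ψ v) := by
  have hmono : Monotone ⇑φ := OrderHomClass.mono φ
  refine ⟨{ toFun := fun u => φ u ⊓ AddCommGroup.torsion G,
            map_sup' := ?_, map_inf' := ?_ }, fun u => rfl, fun u => inf_le_right, ?_⟩
  · -- sup
    intro u v
    rw [map_sup]
    apply le_antisymm
    · intro x hx
      rw [AddSubgroup.mem_inf] at hx
      obtain ⟨hx, hxT⟩ := hx
      rw [AddSubgroup.mem_sup] at hx
      obtain ⟨a, ha, b, hb, hab⟩ := hx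
      obtain ⟨n, hn, hnx⟩ := (mem_torsion_iff' x).mp hxT
      have hsum : n • a + n • b = 0 := by rw [← smul_add, hab, hnx]
      have hnbA : n • b ∈ φ (u ⊓ v) := by
        rw [map_inf, AddSubgroup.mem_inf]
        constructor
        · have hnb : n • b = -(n • a) := by
            rw [eq_neg_iff_add_eq_zero, add_comm]; exact hsum
          rw [hnb]; exact (φ u).neg_mem ((φ u).nsmul_mem ha n)
        · exact (φ v).nsmul_mem hb n
      obtain ⟨c, hc, hnc⟩ := (hpure (u ⊓ v) v inf_le_right).2 n b hb hnbA
      have hcu : c ∈ φ u := hmono inf_le_left hc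
      rw [AddSubgroup.mem_sup]
      have hcv : c ∈ φ v := hmono inf_le_right hc
      refine ⟨a + c, ⟨(φ u).add_mem ha hcu, ?_⟩,
              b - c, ⟨(φ v).sub_mem hb hcv, ?_⟩, by rw [← hab]; abel⟩
      · exact (mem_torsion_iff' _).mpr ⟨n, hn, by rw [smul_add, hnc]; exact hsum⟩
      · exact (mem_torsion_iff' _).mpr ⟨n, hn, by rw [smul_sub, hnc, sub_self]⟩
    · apply sup_le
      · exact inf_le_inf_right _ le_sup_left
      · exact inf_le_inf_right _ le_sup_right
  · -- inf
    intro u v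
    rw [map_inf]
    ext x
    simp only [AddSubgroup.mem_inf]
    tauto
  · -- purity
    rintro u v huv
    obtain ⟨hle, hp⟩ := hpure u v huv
    refine ⟨inf_le_inf_right _ hle, ?_⟩
    rintro n b ⟨hbv, hbT⟩ ⟨hnbu, _⟩
    rcases Nat.eq_zero_or_pos n with rfl | hn
    · exact ⟨0, zero_mem _, by simp⟩
    obtain ⟨a, hau, hna⟩ := hp n b hbv hnbu
    have haT : a ∈ AddCommGroup.torsion G := by
      have h1 : a - b ∈ AddCommGroup.torsion G := by
        rw [mem_torsion_iff']
        exact ⟨n, hn, by rw [smul_sub, hna, sub_self]⟩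
      have h2 := (AddCommGroup.torsion G).add_mem h1 hbT
      simpa using h2
    exact ⟨a, ⟨hau, haT⟩, hna⟩
end

section
/- Let D be a lattice, G an abelian group, and φ : D → Sub(G), u ↦ G_u, a lattice homomorphism satisfying the purity condition. Let π : G → G/T(G) be the canonical projection onto the quotient by the torsion subgroup. Then the map D → Sub(G/T(G)), u ↦ π(G_u), is a lattice homomorphism satisfying the purity condition. -/
private lemma mem_torsion_of_nsmul {G : Type*} [AddCommGroup G] {x : G} {n : ℕ}
    (hn : 0 < n) (h : n • x = 0) : x ∈ AddCommGroup.torsion G :=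
  isOfFinAddOrder_iff_nsmul_eq_zero.mpr ⟨n, hn, h⟩

/-- If `φ : D → Sub G` is a lattice homomorphism satisfying the purity condition, then
`u ↦ π (φ u)`, where `π : G → G/T(G)` is the canonical projection, is a lattice
homomorphism satisfying the purity condition. -/
theorem stmt7 {D G : Type*} [Lattice D] [AddCommGroup G]
    (φ : LatticeHom D (AddSubgroup G))
    (hpure : ∀ u v : D, u ≤ v → IsPureIn (φ u) (φ v)) :
    ∃ ψ : LatticeHom D (AddSubgroup (G ⧸ AddCommGroup.torsion G)),
      (∀ u : D, ψ u = (φ u).map (QuotientAddGroup.mk' (AddCommGroup.torsion G))) ∧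
      ∀ u v : D, u ≤ v → IsPureIn (ψ u) (ψ v) := by
  set T := AddCommGroup.torsion G with hT
  set π := QuotientAddGroup.mk' T with hπ
  -- key: π x = π y ↔ x - y ∈ T
  have hpieq : ∀ x y : G, π x = π y ↔ x - y ∈ T := by
    intro x y
    rw [QuotientAddGroup.mk'_eq_mk']
    constructor
    · rintro ⟨z, hz, rfl⟩
      simpa using neg_mem hz
    · intro h
      exact ⟨y - x, by simpa using neg_mem h, by abel⟩
  refine ⟨{ toFun := fun u => (φ u).map π,
            map_sup' := ?_, map_inf' := ?_ }, fun _ => rfl, ?_⟩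
  · intro a b
    rw [map_sup, AddSubgroup.map_sup]
  · intro a b
    apply le_antisymm
    · rw [map_inf]
      exact le_inf (AddSubgroup.map_mono inf_le_left) (AddSubgroup.map_mono inf_le_right)
    · rintro q ⟨⟨x, hx, rfl⟩, ⟨y, hy, hxy⟩⟩
      obtain ⟨n, hn, hnxy⟩ := isOfFinAddOrder_iff_nsmul_eq_zero.mp ((hpieq y x).mp hxy)
      have hnx : n • x ∈ φ (a ⊓ b) := by
        rw [map_inf]
        refine ⟨AddSubgroup.nsmul_mem _ hx n, ?_⟩
        have : n • x = n • y := by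
          have h2 : n • y - n • x = 0 := by rw [← smul_sub]; exact hnxy
          have := sub_eq_zero.mp h2
          rw [this]
        rw [this]; exact AddSubgroup.nsmul_mem _ hy n
      obtain ⟨c, hc, hnc⟩ := (hpure (a ⊓ b) a inf_le_left).2 n x hx hnx
      refine ⟨c, hc, ?_⟩
      rw [hpieq]
      refine mem_torsion_of_nsmul hn ?_
      rw [smul_sub, hnc, sub_self]
  · intro u v huv
    refine ⟨AddSubgroup.map_mono (OrderHomClass.mono φ huv), ?_⟩
    rintro n b ⟨y, hy, rfl⟩ hnb
    rcases Nat.eq_zero_or_pos n with rfl | hn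
    · exact ⟨0, (AddSubgroup.map π (φ u)).zero_mem, by simp⟩
    obtain ⟨x, hx, hxny⟩ : ∃ x ∈ φ u, π x = π (n • y) := by
      simpa using hnb
    obtain ⟨m, hm, hmny⟩ := isOfFinAddOrder_iff_nsmul_eq_zero.mp ((hpieq x (n • y)).mp hxny)
    have hmn : (m * n) • y ∈ φ u := by
      have : (m * n) • y = m • x := by
        have h1 : m • x - m • (n • y) = 0 := by rw [← smul_sub]; exact hmny
        have h2 := sub_eq_zero.mp h1
        rw [mul_smul, h2]
      rw [this]; exact AddSubgroup.nsmul_mem _ hx m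
    obtain ⟨a, ha, hae⟩ := (hpure u v huv).2 (m * n) y hy hmn
    refine ⟨π a, ⟨a, ha, rfl⟩, ?_⟩
    have : π (n • a) = π (n • y) := by
      rw [hpieq]
      refine mem_torsion_of_nsmul hm ?_
      rw [smul_sub, smul_smul, smul_smul, ← hae, sub_self]
    simpa using this
end

section
/- Let D be a finite distributive lattice, G an abelian group, and φ : D → Sub(G) a lattice homomorphism satisfying the purity condition (u ≤ v implies φ(u) pure in φ(v)). Then φ is purely finitely approximated: for every finitely generated subgroup H of G, there exists a lattice homomorphism ψ : D → Sub(G) satisfying the purity condition such that ψ(u) is finitely generated and H ∩ φ(u) ≤ ψ(u) ≤ φ(u) for all u ∈ D. -/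
lemma fg_of_le {G : Type*} [AddCommGroup G] {A B : AddSubgroup G} (hAB : A ≤ B) (hB : B.FG) :
    A.FG := by
  set N := AddSubgroup.toIntSubmodule B with hN
  set P := AddSubgroup.toIntSubmodule A with hP
  have hPN : P ≤ N := by exact_mod_cast hAB
  have hNfg : N.FG := by
    rw [Submodule.fg_iff_addSubgroup_fg, AddSubgroup.toIntSubmodule_toAddSubgroup]; exact hB
  have : Module.Finite ℤ ↥N := Module.Finite.iff_fg.2 hNfg
  have : IsNoetherian ℤ ↥N := isNoetherian_of_isNoetherianRing_of_finite ℤ N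
  have h1 : (Submodule.comap N.subtype P).FG := IsNoetherian.noetherian _
  have h2 := h1.map N.subtype
  rw [Submodule.map_comap_subtype, inf_eq_right.2 hPN] at h2
  rw [← AddSubgroup.toIntSubmodule_toAddSubgroup A, ← Submodule.fg_iff_addSubgroup_fg]
  exact h2



open scoped DirectSum in
lemma exists_independent_gens (M : Type*) [AddCommGroup M] [AddGroup.FG M] :
    ∃ (ι : Type) (_ : Fintype ι) (g : ι → M),
      AddSubgroup.closure (Set.range g) = ⊤ ∧
      ∀ c : ι → ℤ, (∑ i, c i • g i) = 0 → ∀ i, c i • g i = 0 := by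
  classical
  obtain ⟨n, ι, hι, p, hp, e, ⟨f⟩⟩ := AddCommGroup.equiv_free_prod_directSum_zmod M
  haveI : ∀ i, NeZero (p i ^ e i) := fun i => ⟨pow_ne_zero _ (hp i).ne_zero⟩
  set Z := fun i : ι => ZMod (p i ^ e i) with hZ
  have f' : M ≃+ (Fin n →₀ ℤ) × ⨁ i : ι, Z i := f
  refine ⟨Fin n ⊕ ι, inferInstance, ?_⟩
  set g0 : Fin n ⊕ ι → (Fin n →₀ ℤ) × ⨁ i : ι, Z i :=
    Sum.elim (fun j => (Finsupp.single j 1, 0)) (fun i => (0, DirectSum.of Z i 1)) with hg0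
  have hof1 : ∀ (i : ι) (c : ℤ), c • DirectSum.of Z i 1 = DirectSum.of Z i (c • 1) := by
    intro i c; rw [← map_zsmul]
  have hspan : AddSubgroup.closure (Set.range g0) = ⊤ := by
    have hsp : Submodule.span ℤ (Set.range g0) = ⊤ := by
      rw [eq_top_iff]
      rintro ⟨x, y⟩ -
      have hx : ((x, 0) : (Fin n →₀ ℤ) × ⨁ i : ι, Z i) ∈ Submodule.span ℤ (Set.range g0) := by
        induction x using Finsupp.induction_linear with
        | zero => exact zero_mem _
        | add a b ha hb =>
            have h : ((a + b, 0) : (Fin n →₀ ℤ) × ⨁ i : ι, Z i) = (a, 0) + (b, 0) := by simp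
            rw [h]; exact add_mem ha hb
        | single a b =>
            have h : ((Finsupp.single a b, 0) : (Fin n →₀ ℤ) × ⨁ i : ι, Z i) = b • ((Finsupp.single a 1, 0) : (Fin n →₀ ℤ) × ⨁ i : ι, Z i) := by
              rw [Prod.smul_mk, smul_zero, Finsupp.smul_single, smul_eq_mul, mul_one]
            rw [h]
            exact Submodule.smul_mem _ _ (Submodule.subset_span ⟨Sum.inl a, rfl⟩)
      have hy : ((0, y) : (Fin n →₀ ℤ) × ⨁ i : ι, Z i) ∈ Submodule.span ℤ (Set.range g0) := by
        induction y using DirectSum.induction_on with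
        | zero => exact zero_mem _
        | add a b ha hb =>
            have h : ((0, a + b) : (Fin n →₀ ℤ) × ⨁ i : ι, Z i) = (0, a) + (0, b) := by simp
            rw [h]; exact add_mem ha hb
        | of i x =>
            have h : ((0, DirectSum.of Z i x) : (Fin n →₀ ℤ) × ⨁ i : ι, Z i) = ((x.val : ℤ)) • ((0, DirectSum.of Z i 1) : (Fin n →₀ ℤ) × ⨁ i : ι, Z i) := by
              rw [Prod.smul_mk, smul_zero, hof1, zsmul_eq_mul, mul_one]
              congr 1
              push_cast
              rw [ZMod.natCast_val, ZMod.cast_id]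
            rw [h]
            exact Submodule.smul_mem _ _ (Submodule.subset_span ⟨Sum.inr i, rfl⟩)
      have h : ((x, y) : (Fin n →₀ ℤ) × ⨁ i : ι, Z i) = (x, 0) + (0, y) := by simp
      rw [h]; exact add_mem hx hy
    have h := congrArg (Submodule.toAddSubgroup) hsp
    rwa [Submodule.span_int_eq_addSubgroupClosure] at h
  refine ⟨fun k => f'.symm (g0 k), ?_, ?_⟩
  · have h : (fun k => f'.symm (g0 k)) = ⇑f'.symm ∘ g0 := rfl
    rw [h, Set.range_comp, ← AddEquiv.coe_toAddMonoidHom, ← AddMonoidHom.map_closure, hspan]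
    exact AddSubgroup.map_top_of_surjective _ f'.symm.surjective
  · intro c hc k
    have hsum : (∑ k, c k • g0 k) = 0 := by
      apply f'.symm.injective
      rw [map_sum, map_zero]
      simpa [map_zsmul] using hc
    suffices h0 : c k • g0 k = 0 by rw [← map_zsmul, h0, map_zero]
    have hS1 : (∑ j : Fin n, c (Sum.inl j) • Finsupp.single j (1 : ℤ)) = 0 := by
      have h := congrArg (fun t : (Fin n →₀ ℤ) × ⨁ i : ι, Z i => t.1) hsum
      simp only [Prod.fst_sum, Prod.smul_fst, Fintype.sum_sum_type] at h
      simpa [hg0, Prod.fst_sum, Prod.snd_sum, Prod.smul_fst, Prod.smul_snd] using h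
    have hS2 : (∑ i : ι, c (Sum.inr i) • DirectSum.of Z i 1) = 0 := by
      have h := congrArg (fun t : (Fin n →₀ ℤ) × ⨁ i : ι, Z i => t.2) hsum
      simp only [Prod.snd_sum, Prod.smul_snd, Fintype.sum_sum_type] at h
      simpa [hg0, Prod.fst_sum, Prod.snd_sum, Prod.smul_fst, Prod.smul_snd] using h
    rcases k with j | i
    · have h3 := congrArg (fun u : Fin n →₀ ℤ => u j) hS1
      simp only [Finsupp.finset_sum_apply, Finsupp.coe_zero, Pi.zero_apply,
        Finsupp.smul_apply, Finsupp.single_apply] at h3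
      rw [Finset.sum_eq_single j] at h3
      · rw [if_pos rfl, smul_eq_mul, mul_one] at h3
        show c (Sum.inl j) • ((Finsupp.single j 1, 0) : (Fin n →₀ ℤ) × ⨁ i : ι, Z i) = 0
        rw [Prod.smul_mk, h3, zero_smul, smul_zero]; rfl
      · intro b _ hb; rw [if_neg hb, smul_zero]
      · intro hj; exact absurd (Finset.mem_univ j) hj
    · have h3 := congrArg (DFinsupp.evalAddMonoidHom (β := fun i => Z i) i) hS2
      rw [map_sum, map_zero] at h3
      have hsingle : (∑ b : ι, DFinsupp.evalAddMonoidHom (β := fun i => Z i) i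
            (c (Sum.inr b) • DirectSum.of Z b 1))
          = DFinsupp.evalAddMonoidHom (β := fun i => Z i) i (c (Sum.inr i) • DirectSum.of Z i 1) := by
        apply Finset.sum_eq_single i
        · intro b _ hb
          show (c (Sum.inr b) • DirectSum.of Z b 1) i = 0
          rw [hof1]
          exact DirectSum.of_eq_of_ne _ _ _ hb.symm
        · intro hi; exact absurd (Finset.mem_univ i) hi
      have h4 := hsingle.symm.trans h3
      have h5 : c (Sum.inr i) • (1 : Z i) = 0 := by
        have : DFinsupp.evalAddMonoidHom (β := fun i => Z i) i (c (Sum.inr i) • DirectSum.of Z i 1)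
            = c (Sum.inr i) • (1 : Z i) := by
          show (c (Sum.inr i) • DirectSum.of Z i 1) i = _
          rw [hof1, DirectSum.of_eq_same]
        rwa [this] at h4
      have h6 : c (Sum.inr i) • DirectSum.of Z i 1 = 0 := by
        rw [hof1, h5, map_zero]
      show c (Sum.inr i) • ((0, DirectSum.of Z i 1) : (Fin n →₀ ℤ) × ⨁ i : ι, Z i) = 0
      rw [Prod.smul_mk, smul_zero, h6]; rfl

lemma myfg_map {G Q : Type*} [AddCommGroup G] [AddCommGroup Q] {A : AddSubgroup G}
    (f : G →+ Q) (hA : A.FG) : (A.map f).FG := by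
  rw [AddSubgroup.fg_iff] at hA ⊢
  obtain ⟨S, hS, hfin⟩ := hA
  exact ⟨f '' S, by rw [← AddMonoidHom.map_closure, hS], hfin.image f⟩

lemma myfg_closure {G : Type*} [AddCommGroup G] (s : Set G) (hs : s.Finite) :
    (AddSubgroup.closure s).FG :=
  (AddSubgroup.fg_iff _).2 ⟨s, rfl, hs⟩

lemma myfg_sup {G : Type*} [AddCommGroup G] {A B : AddSubgroup G} (hA : A.FG) (hB : B.FG) :
    (A ⊔ B).FG := by
  rw [AddSubgroup.fg_iff] at hA hB ⊢
  obtain ⟨S, hS, hSf⟩ := hA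
  obtain ⟨T, hT, hTf⟩ := hB
  exact ⟨S ∪ T, by rw [AddSubgroup.closure_union, hS, hT], hSf.union hTf⟩

lemma mem_closure_range_iff {G : Type*} [AddCommGroup G] {ι : Type*} [Fintype ι]
    (g : ι → G) (x : G) :
    x ∈ AddSubgroup.closure (Set.range g) ↔ ∃ c : ι → ℤ, (∑ i, c i • g i) = x := by
  rw [← Submodule.mem_span_range_iff_exists_fun ℤ]
  have h := Submodule.span_int_eq_addSubgroupClosure (M := G) (Set.range g)
  rw [← h]
  rfl

lemma peel {G : Type*} [AddCommGroup G] (m p H : AddSubgroup G)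
    (hpure : IsPureIn (m ⊓ p) p) (hH : H.FG) (hle : H ≤ m ⊔ p) :
    ∃ C : AddSubgroup G, C.FG ∧ C ≤ p ∧ m ⊓ C = ⊥ ∧ H ≤ m ⊔ C := by
  classical
  set π := QuotientAddGroup.mk' m with hπ
  have hker : ∀ x : G, π x = 0 ↔ x ∈ m := fun x => QuotientAddGroup.eq_zero_iff x
  set Hb := H.map π with hHb
  have hHbfg : Hb.FG := myfg_map π hH
  haveI : AddGroup.FG ↥Hb := (AddGroup.fg_iff_addSubgroup_fg Hb).2 hHbfg
  obtain ⟨ι, hι, gb, hspan, hindep⟩ := exists_independent_gens ↥Hb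
  -- choose lifts in p
  have hlift : ∀ k : ι, ∃ v : G, v ∈ p ∧ π v = (gb k : G ⧸ m) := by
    intro k
    obtain ⟨h, hh, hph⟩ := (gb k).2
    obtain ⟨u, hu, v, hv, huv⟩ := (AddSubgroup.mem_sup).1 (hle hh)
    refine ⟨v, hv, ?_⟩
    have : π u = 0 := (hker u).2 hu
    calc π v = π u + π v := by rw [this, zero_add]
    _ = π (u + v) := (map_add π u v).symm
    _ = (gb k : G ⧸ m) := by rw [huv]; exact hph
  choose g hg1 hg2 using hlift
  set n : ι → ℕ := fun k => addOrderOf (gb k) with hn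
  have hnsmul : ∀ k, (n k) • g k ∈ m ⊓ p := by
    intro k
    refine AddSubgroup.mem_inf.2 ⟨?_, ?_⟩
    · rw [← hker]
      rw [map_nsmul, hg2]
      have h0 : (n k) • gb k = 0 := addOrderOf_nsmul_eq_zero (gb k)
      calc (n k) • (gb k : G ⧸ m) = ((n k • gb k : ↥Hb) : G ⧸ m) := by push_cast; ring_nf
      _ = 0 := by rw [h0]; rfl
    · exact AddSubgroup.nsmul_mem p (hg1 k) _
  have hwit : ∀ k, ∃ a ∈ m ⊓ p, (n k) • a = (n k) • g k := by
    intro k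
    exact hpure.2 (n k) (g k) (hg1 k) (hnsmul k)
  choose a ha1 ha2 using hwit
  set g' : ι → G := fun k => g k - a k with hg'
  have hg'p : ∀ k, g' k ∈ p := fun k => sub_mem (hg1 k) (ha1 k).2
  have hg'π : ∀ k, π (g' k) = (gb k : G ⧸ m) := by
    intro k
    rw [hg', map_sub, hg2, (hker (a k)).2 (ha1 k).1, sub_zero]
  have hg'ord : ∀ k, (n k) • g' k = 0 := by
    intro k
    rw [hg', smul_sub, ha2, sub_self]
  set C := AddSubgroup.closure (Set.range g') with hC
  have hCfg : C.FG := myfg_closure _ (Set.finite_range g')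
  have hCp : C ≤ p := by
    rw [hC, AddSubgroup.closure_le]
    rintro x ⟨k, rfl⟩; exact hg'p k
  have hzsmul_ord : ∀ k (c : ℤ), c • gb k = 0 → c • g' k = 0 := by
    intro k c hc
    obtain ⟨d, hd⟩ := addOrderOf_dvd_iff_zsmul_eq_zero.2 hc
    have h2 : ((addOrderOf (gb k) : ℤ)) • g' k = 0 := by
      rw [natCast_zsmul]; exact hg'ord k
    rw [hd, mul_comm, mul_smul, h2, smul_zero]
  refine ⟨C, hCfg, hCp, ?_, ?_⟩
  · rw [eq_bot_iff]
    rintro x ⟨hxm, hxC⟩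
    obtain ⟨c, hc⟩ := (mem_closure_range_iff g' x).1 hxC
    have hπx : π x = 0 := (hker x).2 hxm
    have hsum : (∑ k, c k • gb k) = 0 := by
      apply Subtype.coe_injective
      show ((∑ k, c k • gb k : ↥Hb) : G ⧸ m) = ((0 : ↥Hb) : G ⧸ m)
      have e1 : ((∑ k, c k • gb k : ↥Hb) : G ⧸ m) = ∑ k, c k • (gb k : G ⧸ m) := by
        show Hb.subtype _ = _
        rw [map_sum]
        exact Finset.sum_congr rfl fun k _ => map_zsmul Hb.subtype _ _
      have e2 : (∑ k, c k • (gb k : G ⧸ m)) = π (∑ k, c k • g' k) := by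
        rw [map_sum]
        exact Finset.sum_congr rfl fun k _ => by rw [map_zsmul, hg'π]
      rw [e1, e2, hc, hπx]
      simp
    have hx0 : x = 0 := by
      rw [← hc]
      apply Finset.sum_eq_zero
      intro k _
      exact hzsmul_ord k (c k) (hindep c hsum k)
    simp [hx0]
  · intro h hh
    have hπh : π h ∈ AddSubgroup.closure (Set.range (fun k => (gb k : G ⧸ m))) := by
      have h1 : (⟨π h, AddSubgroup.mem_map_of_mem π hh⟩ : ↥Hb) ∈ AddSubgroup.closure (Set.range gb) := by
        rw [hspan]; trivial
      have h2 := AddSubgroup.mem_map_of_mem Hb.subtype h1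
      rw [AddMonoidHom.map_closure] at h2
      have h3 : (Hb.subtype '' Set.range gb) = Set.range (fun k => (gb k : G ⧸ m)) := by
        ext y; constructor
        · rintro ⟨z, ⟨k, rfl⟩, rfl⟩; exact ⟨k, rfl⟩
        · rintro ⟨k, rfl⟩; exact ⟨gb k, ⟨k, rfl⟩, rfl⟩
      rwa [h3] at h2
    obtain ⟨c, hc⟩ := (mem_closure_range_iff _ (π h)).1 hπh
    have hdiff : h - (∑ k, c k • g' k) ∈ m := by
      rw [← hker, map_sub, map_sum]
      have : ∀ k, π (c k • g' k) = c k • (gb k : G ⧸ m) := by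
        intro k; rw [map_zsmul, hg'π]
      rw [Finset.sum_congr rfl (fun k _ => this k), hc, sub_self]
    have hsumC : (∑ k, c k • g' k) ∈ C := by
      apply AddSubgroup.sum_mem
      intro k _
      exact AddSubgroup.zsmul_mem C (AddSubgroup.subset_closure ⟨k, rfl⟩) _
    rw [AddSubgroup.mem_sup]
    exact ⟨h - ∑ k, c k • g' k, hdiff, ∑ k, c k • g' k, hsumC, sub_add_cancel h _⟩

lemma pure_refl {G : Type*} [AddCommGroup G] (A : AddSubgroup G) : IsPureIn A A :=
  ⟨le_refl _, fun _ b hb _ => ⟨b, hb, rfl⟩⟩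

lemma core_s8 {G : Type*} [AddCommGroup G] (N : ℕ) :
    ∀ (L : Finset (AddSubgroup G)), L.card ≤ N →
    (∀ X ∈ L, ∀ Y ∈ L, X ⊓ Y ∈ L) →
    (∀ X ∈ L, ∀ Y ∈ L, X ⊔ Y ∈ L) →
    (∀ X ∈ L, ∀ Y ∈ L, ∀ Z ∈ L, (X ⊔ Y) ⊓ Z = (X ⊓ Z) ⊔ (Y ⊓ Z)) →
    (∀ X ∈ L, ∀ Y ∈ L, X ≤ Y → IsPureIn X Y) →
    ∀ M ∈ L, (∀ X ∈ L, X ≤ M) →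
    ∀ (H : AddSubgroup G), H.FG → H ≤ M →
    ∃ K : AddSubgroup G, K.FG ∧ H ≤ K ∧ K ≤ M ∧
      (∀ X ∈ L, ∀ Y ∈ L, K ⊓ (X ⊔ Y) = (K ⊓ X) ⊔ (K ⊓ Y)) ∧
      (∀ X ∈ L, ∀ Y ∈ L, X ≤ Y → IsPureIn (K ⊓ X) (K ⊓ Y)) := by
  classical
  induction N with
  | zero =>
      intro L hcard _ _ _ _ M hM _ _ _ _
      rw [Nat.le_zero, Finset.card_eq_zero] at hcard
      subst hcard
      exact absurd hM (Finset.notMem_empty M)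
  | succ N IH =>
      intro L hcard hinf hsup hdist hpur M hM hMtop H hHfg hHM
      -- irreducibility predicate
      set Irr : AddSubgroup G → Prop :=
        fun q => ∀ X ∈ L, ∀ Y ∈ L, X ⊔ Y = q → X = q ∨ Y = q with hIrr
      -- a minimal element of L is irreducible
      obtain ⟨q, hqL, hqmin⟩ : ∃ q ∈ L, ∀ X ∈ L, ¬ X < q := by
        obtain ⟨q, hq⟩ := L.exists_minimal ⟨M, hM⟩; exact ⟨q, hq.1, fun X hX => hq.not_lt hX⟩
      have hqIrr : Irr q := by
        intro X hX Y hY hXY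
        left
        have hXq : X ≤ q := hXY ▸ le_sup_left
        by_contra hne
        exact hqmin X hX (lt_of_le_of_ne hXq hne)
      -- pick a maximal irreducible p
      obtain ⟨p, hpT, hpmax'⟩ : ∃ p ∈ L.filter Irr, ∀ r ∈ L.filter Irr, ¬ p < r := by
        obtain ⟨p, hp⟩ := (L.filter Irr).exists_maximal
          ⟨q, Finset.mem_filter.2 ⟨hqL, hqIrr⟩⟩
        exact ⟨p, hp.1, fun r hr => hp.not_gt hr⟩
      have hpL : p ∈ L := (Finset.mem_filter.1 hpT).1
      have hpIrr : Irr p := (Finset.mem_filter.1 hpT).2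
      have hpmax : ∀ r ∈ L, Irr r → ¬ p < r := by
        intro r hr hrI
        exact hpmax' r (Finset.mem_filter.2 ⟨hr, hrI⟩)
      set L₀ : Finset (AddSubgroup G) := L.filter (fun X => ¬ p ≤ X) with hL₀
      by_cases hL₀ne : L₀.Nonempty
      · -- main case
        -- L₀ is closed under ⊓ and ⊔
        have hL₀mem : ∀ X, X ∈ L₀ ↔ (X ∈ L ∧ ¬ p ≤ X) := fun X => Finset.mem_filter
        have h0inf : ∀ X ∈ L₀, ∀ Y ∈ L₀, X ⊓ Y ∈ L₀ := by
          intro X hX Y hY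
          rw [hL₀mem] at hX hY ⊢
          exact ⟨hinf X hX.1 Y hY.1, fun h => hX.2 (h.trans inf_le_left)⟩
        have h0sup : ∀ X ∈ L₀, ∀ Y ∈ L₀, X ⊔ Y ∈ L₀ := by
          intro X hX Y hY
          rw [hL₀mem] at hX hY ⊢
          refine ⟨hsup X hX.1 Y hY.1, fun h => ?_⟩
          have h1 : (X ⊔ Y) ⊓ p = p := inf_eq_right.2 h
          rw [hdist X hX.1 Y hY.1 p hpL] at h1
          rcases hpIrr (X ⊓ p) (hinf X hX.1 p hpL) (Y ⊓ p) (hinf Y hY.1 p hpL) h1 with h2 | h2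
          · exact hX.2 (by rw [← h2]; exact inf_le_left)
          · exact hY.2 (by rw [← h2]; exact inf_le_left)
        -- top of L₀
        obtain ⟨m, hmL₀, hmmax⟩ : ∃ m ∈ L₀, ∀ r ∈ L₀, ¬ m < r := by
          obtain ⟨m, hm⟩ := L₀.exists_maximal hL₀ne; exact ⟨m, hm.1, fun r hr => hm.not_gt hr⟩
        have hm : ∀ X ∈ L₀, X ≤ m := by
          intro X hX
          have h1 : X ⊔ m ∈ L₀ := h0sup X hX m hmL₀
          have h2 : ¬ m < X ⊔ m := hmmax _ h1
          have h3 : m ≤ X ⊔ m := le_sup_right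
          have h4 : m = X ⊔ m := by
            by_contra hne
            exact h2 (lt_of_le_of_ne h3 (Ne.symm (fun h => hne h.symm)))
          rw [h4]; exact le_sup_left
        have hmL : m ∈ L := (Finset.mem_filter.1 hmL₀).1
        have hmp : ¬ p ≤ m := (Finset.mem_filter.1 hmL₀).2
        -- every member of L is below m ⊔ p
        have hclaimB : ∀ X ∈ L, X ≤ m ⊔ p := by
          by_contra hcon
          push_neg at hcon
          obtain ⟨X₀, hX₀L, hX₀⟩ := hcon
          obtain ⟨X, hXS, hXmin⟩ : ∃ X ∈ L.filter (fun X => ¬ X ≤ m ⊔ p),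
              ∀ Y ∈ L.filter (fun X => ¬ X ≤ m ⊔ p), ¬ Y < X := by
            obtain ⟨X, hX⟩ := (L.filter (fun X => ¬ X ≤ m ⊔ p)).exists_minimal
              ⟨X₀, Finset.mem_filter.2 ⟨hX₀L, hX₀⟩⟩
            exact ⟨X, hX.1, fun Y hY => hX.not_lt hY⟩
          obtain ⟨hXL, hX⟩ := Finset.mem_filter.1 hXS
          have hpX : p ≤ X := by
            by_contra h
            exact hX (le_trans (hm X (Finset.mem_filter.2 ⟨hXL, h⟩)) le_sup_left)
          have hXirr : Irr X := by
            intro U hU V hV hUV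
            by_contra hne
            push_neg at hne
            have hUX : U < X := lt_of_le_of_ne (hUV ▸ le_sup_left) hne.1
            have hVX : V < X := lt_of_le_of_ne (hUV ▸ le_sup_right) hne.2
            have hU2 : U ≤ m ⊔ p := by
              by_contra h
              exact hXmin U (Finset.mem_filter.2 ⟨hU, h⟩) hUX
            have hV2 : V ≤ m ⊔ p := by
              by_contra h
              exact hXmin V (Finset.mem_filter.2 ⟨hV, h⟩) hVX
            exact hX (hUV ▸ sup_le hU2 hV2)
          have hne : p ≠ X := by
            rintro rfl
            exact hX le_sup_right
          exact hpmax X hXL hXirr (lt_of_le_of_ne hpX hne)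
        -- apply peel
        have hmpinf : IsPureIn (m ⊓ p) p :=
          hpur (m ⊓ p) (hinf m hmL p hpL) p hpL inf_le_right
        obtain ⟨C, hCfg, hCp, hCm, hHmC⟩ := peel m p H hmpinf hHfg
          (le_trans hHM (hclaimB M hM))
        -- new finitely generated subgroup to push down
        set H' := m ⊓ (H ⊔ C) with hH'
        have hH'fg : H'.FG := fg_of_le inf_le_right (myfg_sup hHfg hCfg)
        -- cardinality
        have hcard0 : L₀.card ≤ N := by
          have h1 : L₀.card < L.card := Finset.card_lt_card
            ⟨Finset.filter_subset _ _, fun h => (Finset.mem_filter.1 (h hpL)).2 le_rfl⟩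
          omega
        obtain ⟨K₀, hK₀fg, hK₀H', hK₀m, hK₀join, hK₀pure⟩ := IH L₀ hcard0 h0inf h0sup
          (fun X hX Y hY Z hZ => hdist X (Finset.mem_filter.1 hX).1 Y (Finset.mem_filter.1 hY).1
            Z (Finset.mem_filter.1 hZ).1)
          (fun X hX Y hY => hpur X (Finset.mem_filter.1 hX).1 Y (Finset.mem_filter.1 hY).1)
          m hmL₀ hm H' hH'fg inf_le_left
        set K := K₀ ⊔ C with hK
        -- basic membership facts
        have hK₀le : K₀ ≤ m := hK₀m
        have hCm0 : ∀ z, z ∈ m → z ∈ C → z = 0 := by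
          intro z h1 h2
          have : z ∈ m ⊓ C := ⟨h1, h2⟩
          rwa [hCm, AddSubgroup.mem_bot] at this
        -- F1 : for X ∈ L₀, K ⊓ X = K₀ ⊓ X
        have hF1 : ∀ X ∈ L₀, K ⊓ X = K₀ ⊓ X := by
          intro X hX
          apply le_antisymm
          · rintro x ⟨hxK, hxX⟩
            obtain ⟨y, hy, z, hz, hyz⟩ := AddSubgroup.mem_sup.1 hxK
            have hzm : z ∈ m := by
              have : z = x - y := by rw [← hyz]; abel
              rw [this]
              exact sub_mem (hm X hX hxX) (hK₀le hy)
            have hz0 : z = 0 := hCm0 z hzm hz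
            rw [hz0, add_zero] at hyz
            exact ⟨hyz ▸ hy, hxX⟩
          · exact inf_le_inf_right X le_sup_left
        -- F2 : for X ∈ L with p ≤ X, K ⊓ X = (K₀ ⊓ (X ⊓ m)) ⊔ C
        have hF2 : ∀ X ∈ L, p ≤ X → K ⊓ X = (K₀ ⊓ (X ⊓ m)) ⊔ C := by
          intro X hXL hpX
          apply le_antisymm
          · rintro x ⟨hxK, hxX⟩
            obtain ⟨y, hy, z, hz, hyz⟩ := AddSubgroup.mem_sup.1 hxK
            have hzX : z ∈ X := hpX (hCp hz)
            have hyX : y ∈ X := by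
              have : y = x - z := by rw [← hyz]; abel
              rw [this]; exact sub_mem hxX hzX
            exact AddSubgroup.mem_sup.2 ⟨y, ⟨hy, hyX, hK₀le hy⟩, z, hz, hyz⟩
          · apply sup_le
            · exact le_inf (le_trans inf_le_left le_sup_left)
                (le_trans inf_le_right inf_le_left)
            · exact le_inf le_sup_right (le_trans hCp hpX)
        have hXmL₀ : ∀ X ∈ L, X ⊓ m ∈ L₀ := by
          intro X hX
          refine Finset.mem_filter.2 ⟨hinf X hX m hmL, fun h => hmp (h.trans inf_le_right)⟩
        have hmemL₀ : ∀ X ∈ L, ¬ p ≤ X → X ∈ L₀ := fun X hX h => Finset.mem_filter.2 ⟨hX, h⟩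
        refine ⟨K, myfg_sup hK₀fg hCfg, ?_, ?_, ?_, ?_⟩
        · -- H ≤ K
          intro h hh
          obtain ⟨y, hy, z, hz, hyz⟩ := AddSubgroup.mem_sup.1 (hHmC hh)
          have hyH' : y ∈ H' := by
            refine AddSubgroup.mem_inf.2 ⟨hy, ?_⟩
            have : y = h - z := by rw [← hyz]; abel
            rw [this]
            exact sub_mem (AddSubgroup.mem_sup_left hh) (AddSubgroup.mem_sup_right hz)
          exact AddSubgroup.mem_sup.2 ⟨y, hK₀H' hyH', z, hz, hyz⟩
        · -- K ≤ M
          exact sup_le (le_trans hK₀le (hMtop m hmL)) (le_trans hCp (hMtop p hpL))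
        · -- joins
          have hjoin1 : ∀ X ∈ L, ∀ Y ∈ L, p ≤ X → ¬ p ≤ Y →
              K ⊓ (X ⊔ Y) = (K ⊓ X) ⊔ (K ⊓ Y) := by
            intro X hX Y hY hpX hpY
            have hYm : Y ≤ m := hm Y (hmemL₀ Y hY hpY)
            have hXY : p ≤ X ⊔ Y := hpX.trans le_sup_left
            rw [hF2 _ (hsup X hX Y hY) hXY, hF2 X hX hpX, hF1 Y (hmemL₀ Y hY hpY)]
            have e1 : (X ⊔ Y) ⊓ m = (X ⊓ m) ⊔ Y := by
              rw [hdist X hX Y hY m hmL, inf_eq_left.2 hYm]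
            rw [e1, hK₀join (X ⊓ m) (hXmL₀ X hX) Y (hmemL₀ Y hY hpY)]
            rw [sup_right_comm]
          intro X hX Y hY
          by_cases hpX : p ≤ X <;> by_cases hpY : p ≤ Y
          · -- both above p
            have hXY : p ≤ X ⊔ Y := hpX.trans le_sup_left
            rw [hF2 _ (hsup X hX Y hY) hXY, hF2 X hX hpX, hF2 Y hY hpY]
            have e1 : (X ⊔ Y) ⊓ m = (X ⊓ m) ⊔ (Y ⊓ m) := hdist X hX Y hY m hmL
            rw [e1, hK₀join (X ⊓ m) (hXmL₀ X hX) (Y ⊓ m) (hXmL₀ Y hY)]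
            rw [sup_sup_distrib_right]
          · exact hjoin1 X hX Y hY hpX hpY
          · rw [sup_comm X Y, sup_comm (K ⊓ X) (K ⊓ Y)]
            exact hjoin1 Y hY X hX hpY hpX
          · -- both in L₀
            have hX0 := hmemL₀ X hX hpX
            have hY0 := hmemL₀ Y hY hpY
            rw [hF1 _ (h0sup X hX0 Y hY0), hF1 X hX0, hF1 Y hY0]
            exact hK₀join X hX0 Y hY0
        · -- purity
          intro X hX Y hY hXY
          by_cases hpY : p ≤ Y
          · by_cases hpX : p ≤ X
            · -- both above p
              rw [hF2 X hX hpX, hF2 Y hY hpY]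
              have hle' : X ⊓ m ≤ Y ⊓ m := inf_le_inf_right m hXY
              have hpure0 := hK₀pure (X ⊓ m) (hXmL₀ X hX) (Y ⊓ m) (hXmL₀ Y hY) hle'
              constructor
              · exact sup_le (le_trans (le_inf (inf_le_left)
                  (le_trans inf_le_right hle')) le_sup_left) le_sup_right
              · intro n b hb hnb
                obtain ⟨k, hk, c, hc, hkc⟩ := AddSubgroup.mem_sup.1 hb
                obtain ⟨k', hk', c', hc', hkc'⟩ := AddSubgroup.mem_sup.1 hnb
                have he : n • k - k' = c' - n • c := by
                  rw [← hkc] at hkc'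
                  have h1 : n • k + n • c = k' + c' := by rw [← smul_add, hkc']
                  rw [sub_eq_sub_iff_add_eq_add, h1, add_comm]
                have hm1 : n • k - k' ∈ m := sub_mem
                  (hK₀le (AddSubgroup.nsmul_mem K₀ hk.1 n))
                  (hK₀le hk'.1)
                have hC1 : n • k - k' ∈ C := by
                  rw [he]; exact sub_mem hc' (AddSubgroup.nsmul_mem C hc n)
                have h0 : n • k - k' = 0 := hCm0 _ hm1 hC1
                have hnk : n • k = k' := sub_eq_zero.1 h0
                obtain ⟨a₀, ha₀, ha₀eq⟩ := hpure0.2 n k hk (hnk ▸ hk')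
                refine ⟨a₀ + c, AddSubgroup.mem_sup.2 ⟨a₀, ha₀, c, hc, rfl⟩, ?_⟩
                rw [smul_add, ha₀eq, ← hkc, smul_add]
            · -- X in L₀, p ≤ Y
              rw [hF1 X (hmemL₀ X hX hpX), hF2 Y hY hpY]
              have hXYm : X ≤ Y ⊓ m := le_inf hXY (hm X (hmemL₀ X hX hpX))
              have hpure0 := hK₀pure X (hmemL₀ X hX hpX) (Y ⊓ m) (hXmL₀ Y hY)
                hXYm
              constructor
              · exact le_trans (le_inf inf_le_left
                  (le_trans inf_le_right hXYm)) le_sup_left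
              · intro n b hb hnb
                obtain ⟨k, hk, c, hc, hkc⟩ := AddSubgroup.mem_sup.1 hb
                have hnbm : n • b ∈ m := hK₀le (hnb.1)
                have hnc : n • c ∈ m := by
                  have : n • c = n • b - n • k := by
                    rw [← hkc, smul_add]; abel
                  rw [this]
                  exact sub_mem hnbm (hK₀le (AddSubgroup.nsmul_mem K₀ hk.1 n))
                have hnc0 : n • c = 0 := hCm0 _ hnc (AddSubgroup.nsmul_mem C hc n)
                have hnb' : n • b = n • k := by
                  rw [← hkc, smul_add, hnc0, add_zero]
                obtain ⟨a, ha, haeq⟩ := hpure0.2 n k hk (hnb' ▸ hnb)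
                exact ⟨a, ha, by rw [haeq, ← hnb']⟩
          · -- both in L₀
            have hpX : ¬ p ≤ X := fun h => hpY (h.trans hXY)
            rw [hF1 X (hmemL₀ X hX hpX), hF1 Y (hmemL₀ Y hY hpY)]
            exact hK₀pure X (hmemL₀ X hX hpX) Y (hmemL₀ Y hY hpY) hXY
      · -- degenerate case : L₀ = ∅, i.e. p ≤ X for all X ∈ L; then L = {p}
        have hallp : ∀ X ∈ L, p ≤ X := by
          intro X hX
          by_contra h
          exact hL₀ne ⟨X, Finset.mem_filter.2 ⟨hX, h⟩⟩
        have hallep : ∀ X ∈ L, X = p := by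
          by_contra hcon
          push_neg at hcon
          obtain ⟨X₀, hX₀L, hX₀⟩ := hcon
          obtain ⟨X, hXS, hXmin⟩ : ∃ X ∈ L.filter (fun X => X ≠ p),
              ∀ Y ∈ L.filter (fun X => X ≠ p), ¬ Y < X := by
            obtain ⟨X, hX⟩ := (L.filter (fun X => X ≠ p)).exists_minimal
              ⟨X₀, Finset.mem_filter.2 ⟨hX₀L, hX₀⟩⟩
            exact ⟨X, hX.1, fun Y hY => hX.not_lt hY⟩
          obtain ⟨hXL, hXne⟩ := Finset.mem_filter.1 hXS
          have hXirr : Irr X := by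
            intro U hU V hV hUV
            by_contra hne
            push_neg at hne
            have hUX : U < X := lt_of_le_of_ne (hUV ▸ le_sup_left) hne.1
            have hVX : V < X := lt_of_le_of_ne (hUV ▸ le_sup_right) hne.2
            by_cases hUp : U = p
            · by_cases hVp : V = p
              · exact hXne (by rw [← hUV, hUp, hVp, sup_idem])
              · exact hXmin V (Finset.mem_filter.2 ⟨hV, hVp⟩) hVX
            · exact hXmin U (Finset.mem_filter.2 ⟨hU, hUp⟩) hUX
          exact hpmax X hXL hXirr (lt_of_le_of_ne (hallp X hXL) (Ne.symm hXne))
        refine ⟨H, hHfg, le_refl H, hHM, ?_, ?_⟩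
        · intro X hX Y hY
          rw [hallep X hX, hallep Y hY, sup_idem, sup_idem]
        · intro X hX Y hY _
          rw [hallep X hX, hallep Y hY]
          exact pure_refl _


/-- Pure approximation theorem: every lattice homomorphism from a finite distributive
lattice to `Sub G` satisfying the purity condition is purely finitely approximated. -/
theorem stmt8 {D G : Type*} [DistribLattice D] [Fintype D] [AddCommGroup G]
    (φ : LatticeHom D (AddSubgroup G))
    (hpure : ∀ u v : D, u ≤ v → IsPureIn (φ u) (φ v))
    (H : AddSubgroup G) (hH : H.FG) :
    ∃ ψ : LatticeHom D (AddSubgroup G),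
      (∀ u v : D, u ≤ v → IsPureIn (ψ u) (ψ v)) ∧
      ∀ u : D, (ψ u).FG ∧ H ⊓ φ u ≤ ψ u ∧ ψ u ≤ φ u := by
  classical
  rcases isEmpty_or_nonempty D with hD | hD
  · exact ⟨⟨⟨fun u => isEmptyElim u, fun a => isEmptyElim a⟩, fun a => isEmptyElim a⟩,
      fun u => isEmptyElim u, fun u => isEmptyElim u⟩
  · have hmono : Monotone (fun u : D => φ u) := fun a b h => by
      have hab : φ a ⊔ φ b = φ b := by rw [← map_sup, sup_eq_right.2 h]
      show φ a ≤ φ b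
      rw [← hab]; exact le_sup_left
    set T : D := Finset.univ.sup' Finset.univ_nonempty id with hT
    have htop : ∀ u : D, u ≤ T := fun u => Finset.le_sup' id (Finset.mem_univ u)
    set L : Finset (AddSubgroup G) := Finset.image (fun u => φ u) Finset.univ with hL
    have hmemL : ∀ X : AddSubgroup G, X ∈ L ↔ ∃ u : D, φ u = X := by
      intro X
      rw [hL, Finset.mem_image]
      constructor
      · rintro ⟨u, _, h⟩; exact ⟨u, h⟩
      · rintro ⟨u, h⟩; exact ⟨u, Finset.mem_univ u, h⟩
    have hinf : ∀ X ∈ L, ∀ Y ∈ L, X ⊓ Y ∈ L := by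
      intro X hX Y hY
      obtain ⟨u, rfl⟩ := (hmemL X).1 hX
      obtain ⟨v, rfl⟩ := (hmemL Y).1 hY
      exact (hmemL _).2 ⟨u ⊓ v, map_inf φ u v⟩
    have hsup : ∀ X ∈ L, ∀ Y ∈ L, X ⊔ Y ∈ L := by
      intro X hX Y hY
      obtain ⟨u, rfl⟩ := (hmemL X).1 hX
      obtain ⟨v, rfl⟩ := (hmemL Y).1 hY
      exact (hmemL _).2 ⟨u ⊔ v, map_sup φ u v⟩
    have hdist : ∀ X ∈ L, ∀ Y ∈ L, ∀ Z ∈ L, (X ⊔ Y) ⊓ Z = (X ⊓ Z) ⊔ (Y ⊓ Z) := by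
      intro X hX Y hY Z hZ
      obtain ⟨u, rfl⟩ := (hmemL X).1 hX
      obtain ⟨v, rfl⟩ := (hmemL Y).1 hY
      obtain ⟨w, rfl⟩ := (hmemL Z).1 hZ
      rw [← map_sup, ← map_inf, ← map_inf, ← map_inf, ← map_sup, inf_sup_right]
    have hpurL : ∀ X ∈ L, ∀ Y ∈ L, X ≤ Y → IsPureIn X Y := by
      intro X hX Y hY hXY
      obtain ⟨u, rfl⟩ := (hmemL X).1 hX
      obtain ⟨v, rfl⟩ := (hmemL Y).1 hY
      have h1 : φ (u ⊓ v) = φ u := by rw [map_inf, inf_eq_left.2 hXY]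
      rw [← h1]
      exact hpure (u ⊓ v) v inf_le_right
    have hML : φ T ∈ L := (hmemL _).2 ⟨T, rfl⟩
    have hMtop : ∀ X ∈ L, X ≤ φ T := by
      intro X hX
      obtain ⟨u, rfl⟩ := (hmemL X).1 hX
      exact hmono (htop u)
    have hH₁fg : (H ⊓ φ T).FG := fg_of_le inf_le_left hH
    obtain ⟨K, hKfg, hKH, hKM, hKjoin, hKpure⟩ := core_s8 L.card L le_rfl hinf hsup hdist hpurL
      (φ T) hML hMtop (H ⊓ φ T) hH₁fg inf_le_right
    refine ⟨⟨⟨fun u => K ⊓ φ u, ?_⟩, ?_⟩, ?_, ?_⟩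
    · intro u v
      show K ⊓ φ (u ⊔ v) = (K ⊓ φ u) ⊔ (K ⊓ φ v)
      rw [map_sup]
      exact hKjoin (φ u) ((hmemL _).2 ⟨u, rfl⟩) (φ v) ((hmemL _).2 ⟨v, rfl⟩)
    · intro u v
      show K ⊓ φ (u ⊓ v) = (K ⊓ φ u) ⊓ (K ⊓ φ v)
      rw [map_inf, inf_inf_distrib_left]
    · intro u v huv
      exact hKpure (φ u) ((hmemL _).2 ⟨u, rfl⟩) (φ v) ((hmemL _).2 ⟨v, rfl⟩) (hmono huv)
    · intro u
      refine ⟨fg_of_le inf_le_left hKfg, ?_, inf_le_right⟩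
      rintro x ⟨hxH, hxu⟩
      have hx1 : x ∈ H ⊓ φ T := ⟨hxH, hMtop (φ u) ((hmemL _).2 ⟨u, rfl⟩) hxu⟩
      exact ⟨hKH hx1, hxu⟩
end

section
/- A subgroup A of an abelian group B is a pure subgroup if and only if for every finitely generated subgroup H ≤ B, there exist finitely generated subgroups A' ≤ A and B' ≤ B such that A ∩ H ≤ A', H ≤ B', and A' is a direct summand of B'. -/
private lemma addSubgroup_fg_of_le {B : Type*} [AddCommGroup B] {K L : AddSubgroup B}
    (hKL : K ≤ L) (hL : L.FG) : K.FG := by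
  have hL' : (AddSubgroup.toIntSubmodule L).FG := by
    rw [Submodule.fg_iff_addSubgroup_fg, AddSubgroup.toIntSubmodule_toAddSubgroup]; exact hL
  haveI : Module.Finite ℤ ↥(AddSubgroup.toIntSubmodule L) := Module.Finite.iff_fg.mpr hL'
  haveI : IsNoetherian ℤ ↥(AddSubgroup.toIntSubmodule L) :=
    isNoetherian_of_isNoetherianRing_of_finite ℤ _
  have h1 : ((AddSubgroup.toIntSubmodule K).comap
      (AddSubgroup.toIntSubmodule L).subtype).FG := IsNoetherian.noetherian _
  have h2 := h1.map (AddSubgroup.toIntSubmodule L).subtype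
  rw [Submodule.map_comap_subtype, inf_eq_right.mpr
    (AddSubgroup.toIntSubmodule.le_iff_le.mpr hKL)] at h2
  rw [← AddSubgroup.toIntSubmodule_toAddSubgroup K, ← Submodule.fg_iff_addSubgroup_fg]
  exact h2

private lemma addSubgroup_fg_sup {B : Type*} [AddCommGroup B] {K L : AddSubgroup B}
    (hK : K.FG) (hL : L.FG) : (K ⊔ L).FG := by
  classical
  obtain ⟨S, hS⟩ := hK; obtain ⟨T, hT⟩ := hL
  exact ⟨S ∪ T, by rw [Finset.coe_union, AddSubgroup.closure_union, hS, hT]⟩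

private lemma pure_exists_complement {B : Type*} [AddCommGroup B] (A : AddSubgroup B)
    (hpure : ∀ (n : ℕ) (b : B), n • b ∈ A → ∃ a ∈ A, n • a = n • b)
    (H : AddSubgroup B) (hH : H.FG) :
    ∃ C : AddSubgroup B, C.FG ∧ A ⊓ C = ⊥ ∧ H ≤ A ⊔ C := by
  classical
  set π : B →+ B ⧸ A := QuotientAddGroup.mk' A with hπ
  set Q : AddSubgroup (B ⧸ A) := H.map π with hQdef
  have hQfg : Q.FG := by
    obtain ⟨S, hS⟩ := hH
    exact ⟨S.image π, by rw [Finset.coe_image, ← AddMonoidHom.map_closure, hS]⟩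
  haveI : AddGroup.FG ↥Q := (AddGroup.fg_iff_addSubgroup_fg Q).mpr hQfg
  obtain ⟨n, ι, fι, p, hp, e, ⟨σ⟩⟩ := AddCommGroup.equiv_free_prod_directSum_zmod ↥Q
  -- target map: model → B ⧸ A
  set tgt : ((Fin n →₀ ℤ) × DirectSum ι fun i => ZMod (p i ^ e i)) → B ⧸ A :=
    fun m => ((σ.symm m : Q) : B ⧸ A) with htgt
  -- lifts of free generators
  have hu : ∀ j : Fin n, ∃ x : B, π x = tgt (Finsupp.single j 1, 0) :=
    fun j => QuotientAddGroup.mk'_surjective A _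
  choose u hu using hu
  -- lifts of torsion generators
  have hx : ∀ i : ι, ∃ x : B, π x = tgt (0, DirectSum.of (fun i => ZMod (p i ^ e i)) i 1) :=
    fun i => QuotientAddGroup.mk'_surjective A _
  choose x hx using hx
  have hqx : ∀ i : ι, (p i ^ e i) • x i ∈ A := by
    intro i
    have h1 : (p i ^ e i) • (1 : ZMod (p i ^ e i)) = 0 := by
      rw [nsmul_eq_mul, mul_one, ZMod.natCast_self]
    have h2 : (p i ^ e i) • tgt (0, DirectSum.of (fun i => ZMod (p i ^ e i)) i 1) = 0 := by
      rw [htgt]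
      rw [← AddSubgroup.coe_nsmul, ← map_nsmul]
      have : (p i ^ e i) • ((0, DirectSum.of (fun i => ZMod (p i ^ e i)) i 1) :
          (Fin n →₀ ℤ) × DirectSum ι fun i => ZMod (p i ^ e i)) = 0 := by
        rw [Prod.smul_def]
        simp only [smul_zero, Prod.mk_eq_zero, true_and]
        rw [← map_nsmul, h1, map_zero]
      rw [this, map_zero, AddSubgroup.coe_zero]
    rw [← QuotientAddGroup.eq_zero_iff]
    show π _ = 0
    rw [map_nsmul, hx i, h2]
  have ha : ∀ i : ι, ∃ a ∈ A, (p i ^ e i) • a = (p i ^ e i) • x i :=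
    fun i => hpure _ _ (hqx i)
  choose a haA hax using ha
  set y : ι → B := fun i => x i - a i with hy
  have hyq : ∀ i, (p i ^ e i) • y i = 0 := by
    intro i; rw [hy]; simp only [smul_sub]; rw [hax i]; abel
  have hπy : ∀ i, π (y i) = tgt (0, DirectSum.of (fun i => ZMod (p i ^ e i)) i 1) := by
    intro i
    have h0 : π (a i) = 0 := (QuotientAddGroup.eq_zero_iff _).mpr (haA i)
    rw [hy, map_sub, hx i, h0, sub_zero]
  -- build the homomorphism
  set ψ₁ : (Fin n →₀ ℤ) →+ B := Finsupp.liftAddHom (fun j => zmultiplesHom B (u j)) with hψ₁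
  set ψ₂ : (DirectSum ι fun i => ZMod (p i ^ e i)) →+ B :=
    DirectSum.toAddMonoid (fun i => ZMod.lift (p i ^ e i)
      ⟨zmultiplesHom B (y i), by
        simp only [zmultiplesHom_apply]
        rw [natCast_zsmul, hyq i]⟩) with hψ₂
  set ψ : ((Fin n →₀ ℤ) × DirectSum ι fun i => ZMod (p i ^ e i)) →+ B := ψ₁.coprod ψ₂ with hψ
  have htgt_add : ∀ m₁ m₂, tgt (m₁ + m₂) = tgt m₁ + tgt m₂ := by
    intro m₁ m₂; simp only [htgt, map_add, AddSubgroup.coe_add]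
  have htgt_zsmul : ∀ (k : ℤ) m, tgt (k • m) = k • tgt m := by
    intro k m; simp only [htgt, map_zsmul, AddSubgroup.coe_zsmul]
  have key₁ : π.comp ψ₁ = (Q.subtype.comp σ.symm.toAddMonoidHom).comp
      (AddMonoidHom.inl _ _) := by
    ext j
    simp only [AddMonoidHom.comp_apply, AddMonoidHom.inl_apply, hψ₁,
      Finsupp.singleAddHom_apply, Finsupp.liftAddHom_apply_single,
      zmultiplesHom_apply, one_zsmul]
    exact hu j
  have key₂ : ∀ d, π (ψ₂ d) = tgt (0, d) := by
    intro d
    induction d using DirectSum.induction_on with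
    | zero => simp [htgt, ← Prod.zero_mk_add_zero_mk, Prod.mk_zero_zero]
    | of i z =>
      obtain ⟨k, rfl⟩ := ZMod.intCast_surjective z
      have h1 : ψ₂ (DirectSum.of (fun i => ZMod (p i ^ e i)) i ((k : ℤ) : ZMod (p i ^ e i)))
          = k • y i := by
        rw [hψ₂, DirectSum.toAddMonoid_of, ZMod.lift_coe]
        simp only [zmultiplesHom_apply]
      have h2 : ((k : ℤ) : ZMod (p i ^ e i)) = k • (1 : ZMod (p i ^ e i)) := by
        rw [zsmul_eq_mul, mul_one]
      rw [h1, map_zsmul, hπy i, h2]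
      have h3 : ((0, DirectSum.of (fun i => ZMod (p i ^ e i)) i
            (k • (1 : ZMod (p i ^ e i)))) : (Fin n →₀ ℤ) ×
            DirectSum ι fun i => ZMod (p i ^ e i))
          = k • (0, DirectSum.of (fun i => ZMod (p i ^ e i)) i 1) := by
        rw [Prod.smul_def, smul_zero, map_zsmul]
      rw [h3, htgt_zsmul]
    | add d₁ d₂ h₁ h₂ =>
      rw [map_add, map_add, h₁, h₂, ← htgt_add]
      congr 1
  have hπψ : ∀ m, π (ψ m) = tgt m := by
    rintro ⟨f, d⟩
    have : ψ (f, d) = ψ₁ f + ψ₂ d := rfl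
    rw [this, map_add, key₂]
    have h1 : π (ψ₁ f) = tgt (f, 0) := DFunLike.congr_fun key₁ f
    rw [h1, ← htgt_add]
    congr 1
    simp [Prod.ext_iff]
  -- the complement
  refine ⟨ψ.range, ?_, ?_, ?_⟩
  · haveI : ∀ i, NeZero (p i ^ e i) := fun i => ⟨pow_ne_zero _ (hp i).ne_zero⟩
    haveI : Finite (DirectSum ι fun i => ZMod (p i ^ e i)) :=
      Finite.of_equiv _ (DFinsupp.equivFunOnFintype).symm
    haveI : Module.Finite ℤ ((Fin n →₀ ℤ) × DirectSum ι fun i => ZMod (p i ^ e i)) :=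
      inferInstance
    haveI : AddGroup.FG ((Fin n →₀ ℤ) × DirectSum ι fun i => ZMod (p i ^ e i)) :=
      Module.Finite.iff_addGroup_fg.mp inferInstance
    exact (AddGroup.fg_iff_addSubgroup_fg _).mp inferInstance
  · rw [eq_bot_iff]
    rintro b ⟨hbA, m, rfl⟩
    have h0 : ((σ.symm m : Q) : B ⧸ A) = 0 := by
      rw [show ((σ.symm m : Q) : B ⧸ A) = tgt m from rfl, ← hπψ m]
      exact (QuotientAddGroup.eq_zero_iff _).mpr hbA
    have h1 : σ.symm m = 0 := ZeroMemClass.coe_eq_zero.mp h0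
    have h2 : m = 0 := by rwa [AddEquiv.map_eq_zero_iff] at h1
    rw [h2, map_zero]
    exact AddSubgroup.mem_bot.mpr rfl
  · intro h hh
    have hπh : π h ∈ Q := ⟨h, hh, rfl⟩
    have hm : π (ψ (σ ⟨π h, hπh⟩)) = π h := by
      rw [hπψ, show tgt (σ ⟨π h, hπh⟩) = ((σ.symm (σ ⟨π h, hπh⟩) : Q) : B ⧸ A) from rfl,
        AddEquiv.symm_apply_apply]
    have h1 : h - ψ (σ ⟨π h, hπh⟩) ∈ A := by
      have : π (h - ψ (σ ⟨π h, hπh⟩)) = 0 := by rw [map_sub, hm, sub_self]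
      exact (QuotientAddGroup.eq_zero_iff _).mp this
    exact AddSubgroup.mem_sup.mpr ⟨h - ψ (σ ⟨π h, hπh⟩), h1, ψ (σ ⟨π h, hπh⟩),
      ⟨_, rfl⟩, by abel⟩


/-- A subgroup `A` of an abelian group `B` is pure iff for every finitely generated
subgroup `H` of `B` there are finitely generated subgroups `A' ≤ A` and `B' ≤ B` with
`A ⊓ H ≤ A'`, `H ≤ B'`, and `A'` a direct summand of `B'`. -/
theorem stmt9 {B : Type*} [AddCommGroup B] (A : AddSubgroup B) :
    (∀ (n : ℕ) (b : B), n • b ∈ A → ∃ a ∈ A, n • a = n • b) ↔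
      ∀ H : AddSubgroup B, H.FG →
        ∃ A' B' : AddSubgroup B, A'.FG ∧ B'.FG ∧ A' ≤ A ∧ A ⊓ H ≤ A' ∧ H ≤ B' ∧
          A' ≤ B' ∧ ∃ C : AddSubgroup B, C ≤ B' ∧ A' ⊔ C = B' ∧ A' ⊓ C = ⊥ := by
  constructor
  · intro hpure H hH
    obtain ⟨C, hCfg, hAC, hHAC⟩ := pure_exists_complement A hpure H hH
    refine ⟨A ⊓ (H ⊔ C), (A ⊓ (H ⊔ C)) ⊔ C, ?_, ?_, inf_le_left, ?_, ?_, le_sup_left,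
      C, le_sup_right, rfl, ?_⟩
    · exact addSubgroup_fg_of_le inf_le_right (addSubgroup_fg_sup hH hCfg)
    · exact addSubgroup_fg_sup
        (addSubgroup_fg_of_le inf_le_right (addSubgroup_fg_sup hH hCfg)) hCfg
    · exact le_inf inf_le_left (inf_le_right.trans le_sup_left)
    · intro h hh
      obtain ⟨a, haA, c, hcC, hach⟩ := AddSubgroup.mem_sup.mp (hHAC hh)
      have ha' : a ∈ A ⊓ (H ⊔ C) := by
        refine AddSubgroup.mem_inf.mpr ⟨haA, ?_⟩
        have : a = h - c := by rw [← hach]; abel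
        rw [this]
        exact sub_mem ((le_sup_left : H ≤ H ⊔ C) hh) ((le_sup_right : C ≤ H ⊔ C) hcC)
      exact AddSubgroup.mem_sup.mpr ⟨a, ha', c, hcC, hach⟩
    · rw [eq_bot_iff, ← hAC]
      exact inf_le_inf_right C inf_le_left
  · intro h n b hnb
    obtain ⟨A', B', -, -, hA'A, hAH, hHB', -, C, -, hsup, hinf⟩ :=
      h (AddSubgroup.closure {b}) ⟨{b}, by simp⟩
    have hb : b ∈ AddSubgroup.closure ({b} : Set B) :=
      AddSubgroup.subset_closure rfl
    have hbB' : b ∈ A' ⊔ C := by rw [hsup]; exact hHB' hb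
    obtain ⟨a, haA', c, hcC, hacb⟩ := (AddSubgroup.mem_sup).mp hbB'
    have hnbA' : n • b ∈ A' := hAH ⟨hnb, AddSubgroup.nsmul_mem _ hb n⟩
    have hncC : n • c ∈ A' := by
      have : n • c = n • b - n • a := by rw [← hacb, smul_add]; abel
      rw [this]
      exact sub_mem hnbA' (AddSubgroup.nsmul_mem _ haA' n)
    have hnc0 : n • c = 0 := by
      have : n • c ∈ A' ⊓ C := ⟨hncC, AddSubgroup.nsmul_mem _ hcC n⟩
      rwa [hinf, AddSubgroup.mem_bot] at this
    exact ⟨a, hA'A haA', by rw [← hacb, smul_add, hnc0, add_zero]⟩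
end

section
/- Let A be a torsion abelian group and B a pure subgroup of A such that mA = 0 for some positive integer m. Then B is a direct summand of A. -/
/-- Auxiliary: in a group of prime exponent `p`, every subgroup is a direct summand. -/
lemma kulikov_elem {p : ℕ} (hp : p.Prime) {G : Type*} [AddCommGroup G]
    (hbdd : ∀ x : G, p • x = 0) (B : AddSubgroup G) :
    ∃ C : AddSubgroup G, B ⊔ C = ⊤ ∧ B ⊓ C = ⊥ := by
  haveI : Fact p.Prime := ⟨hp⟩
  haveI : NeZero p := ⟨hp.ne_zero⟩
  haveI : Module (ZMod p) G := AddCommGroup.zmodModule hbdd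
  let e := AddSubgroup.toZModSubmodule (M := G) p
  obtain ⟨q, hq⟩ := Submodule.exists_isCompl (e B)
  refine ⟨e.symm q, ?_, ?_⟩
  · calc B ⊔ e.symm q = e.symm (e B) ⊔ e.symm q := by rw [e.symm_apply_apply]
      _ = e.symm (e B ⊔ q) := (e.symm.map_sup _ _).symm
      _ = ⊤ := by rw [hq.sup_eq_top, e.symm.map_top]
  · calc B ⊓ e.symm q = e.symm (e B) ⊓ e.symm q := by rw [e.symm_apply_apply]
      _ = e.symm (e B ⊓ q) := (e.symm.map_inf _ _).symm
      _ = ⊥ := by rw [hq.inf_eq_bot, e.symm.map_bot]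

/-- nsmul as an additive hom on a commutative group. -/
def nsmulHom {G : Type*} [AddCommGroup G] (p : ℕ) : G →+ G :=
  AddMonoidHom.mk' (p • ·) (fun a b => smul_add p a b)

lemma kulikov_aux : ∀ (m : ℕ), 0 < m → ∀ {A : Type u} [AddCommGroup A] (B : AddSubgroup A),
    (∀ x : A, m • x = 0) →
    (∀ (n : ℕ) (a : A), n • a ∈ B → ∃ b ∈ B, n • b = n • a) →
    ∃ C : AddSubgroup A, B ⊔ C = ⊤ ∧ B ⊓ C = ⊥ := by
  intro m
  induction m using Nat.strong_induction_on with
  | _ m IH =>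
  intro hm A _ B hbdd hpure
  rcases eq_or_lt_of_le (show 1 ≤ m from hm) with h1 | h1
  · -- m = 1 : the group is trivial
    rw [← h1] at hbdd
    have hall : ∀ x : A, x = 0 := fun x => by simpa using hbdd x
    refine ⟨⊤, by simp, ?_⟩
    rw [inf_top_eq]
    exact le_bot_iff.mp (fun x _ => by simp [hall x])
  -- m > 1
  set p := m.minFac with hpdef
  have hp : p.Prime := Nat.minFac_prime (by omega)
  have hdvd : p ∣ m := Nat.minFac_dvd m
  set n := m / p with hndef
  have hnp : n * p = m := Nat.div_mul_cancel hdvd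
  have hnpos : 0 < n := Nat.div_pos (Nat.minFac_le hm) hp.pos
  have hnlt : n < m := Nat.div_lt_self hm hp.one_lt
  -- the subgroup pA
  set pA : AddSubgroup A := (nsmulHom p).range with hpAdef
  have mem_pA : ∀ x : A, x ∈ pA ↔ ∃ a : A, p • a = x := fun x => Iff.rfl
  set B' : AddSubgroup pA := B.addSubgroupOf pA with hB'def
  -- apply induction hypothesis to pA
  have hbdd' : ∀ x : pA, n • x = 0 := by
    rintro ⟨x, a, rfl⟩
    ext
    push_cast
    show n • p • a = 0
    rw [smul_smul, hnp, hbdd]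
  have hpure' : ∀ (k : ℕ) (a : pA), k • a ∈ B' → ∃ b ∈ B', k • b = k • a := by
    rintro k ⟨x, a₀, rfl⟩ hk
    have hk' : (k * p) • a₀ ∈ B := by
      rw [mul_smul]
      simpa [hB'def, AddSubgroup.mem_addSubgroupOf, nsmulHom] using hk
    obtain ⟨b₀, hb₀B, hb₀⟩ := hpure (k * p) a₀ hk'
    refine ⟨⟨p • b₀, b₀, rfl⟩, ?_, ?_⟩
    · simpa [hB'def, AddSubgroup.mem_addSubgroupOf] using AddSubgroup.nsmul_mem B hb₀B p
    · ext
      push_cast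
      show k • p • b₀ = k • p • a₀
      rw [smul_smul, smul_smul, hb₀]
  obtain ⟨C', hC'sup, hC'inf⟩ := IH n hnlt hnpos B' hbdd' hpure'
  set C₀ : AddSubgroup A := C'.map pA.subtype with hC₀def
  have hC₀pA : C₀ ≤ pA := by
    rintro x ⟨y, _, rfl⟩
    exact y.2
  -- B ⊓ C₀ = ⊥
  have hBC₀ : ∀ x : A, x ∈ B → x ∈ C₀ → x = 0 := by
    rintro x hxB ⟨y, hyC', rfl⟩
    have hyB' : y ∈ B' := by simpa [hB'def, AddSubgroup.mem_addSubgroupOf] using hxB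
    have : y ∈ B' ⊓ C' := ⟨hyB', hyC'⟩
    rw [hC'inf, AddSubgroup.mem_bot] at this
    simp [this]
  -- key fact (★)
  have hstar : ∀ a : A, ∃ b ∈ B, p • b - p • a ∈ C₀ := by
    intro a
    have hmem : (⟨p • a, a, rfl⟩ : pA) ∈ B' ⊔ C' := by rw [hC'sup]; trivial
    obtain ⟨y, hy, z, hz, hyz⟩ := AddSubgroup.mem_sup.mp hmem
    have hyB : (y : A) ∈ B := by simpa [hB'def, AddSubgroup.mem_addSubgroupOf] using hy
    obtain ⟨a₀, ha₀⟩ := y.2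
    have ha₀' : p • a₀ = (y : A) := ha₀
    obtain ⟨b, hbB, hb⟩ := hpure p a₀ (by rw [ha₀']; exact hyB)
    refine ⟨b, hbB, ?_⟩
    have h1 : p • b = (y : A) := by rw [hb, ha₀']
    have h2 : (y : A) + (z : A) = p • a := congrArg Subtype.val hyz
    have : p • b - p • a = -(z : A) := by rw [h1, ← h2]; abel
    rw [this]
    exact neg_mem ⟨z, hz, rfl⟩
  -- quotient by C₀
  set mk : A →+ A ⧸ C₀ := QuotientAddGroup.mk' C₀ with hmkdef
  have hker : ∀ x : A, mk x = 0 ↔ x ∈ C₀ := fun x =>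
    (QuotientAddGroup.eq_zero_iff x)
  set Bbar : AddSubgroup (A ⧸ C₀) := B.map mk with hBbardef
  set S : AddSubgroup (A ⧸ C₀) := (nsmulHom p (G := A ⧸ C₀)).ker with hSdef
  have mem_S : ∀ g : A ⧸ C₀, g ∈ S ↔ p • g = 0 := fun g => Iff.rfl
  have hSbdd : ∀ x : S, p • x = 0 := by
    rintro ⟨x, hx⟩
    ext
    push_cast
    exact hx
  obtain ⟨T', hT'sup, hT'inf⟩ := kulikov_elem hp hSbdd (Bbar.addSubgroupOf S)
  set T : AddSubgroup (A ⧸ C₀) := T'.map S.subtype with hTdef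
  refine ⟨T.comap mk, ?_, ?_⟩
  · -- B ⊔ C = ⊤
    rw [eq_top_iff]
    intro a _
    obtain ⟨b', hb'B, hb'⟩ := hstar a
    have hgS : mk (a - b') ∈ S := by
      rw [mem_S, ← map_nsmul]
      rw [hker]
      have : p • (a - b') = -(p • b' - p • a) := by rw [smul_sub]; abel
      rw [this]
      exact neg_mem hb'
    have hmem : (⟨mk (a - b'), hgS⟩ : S) ∈ Bbar.addSubgroupOf S ⊔ T' := by
      rw [hT'sup]; trivial
    obtain ⟨y, hy, z, hz, hyz⟩ := AddSubgroup.mem_sup.mp hmem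
    have hyB : (y : A ⧸ C₀) ∈ Bbar := by
      simpa [AddSubgroup.mem_addSubgroupOf] using hy
    obtain ⟨b₂, hb₂B, hb₂⟩ := hyB
    have hsum : (y : A ⧸ C₀) + (z : A ⧸ C₀) = mk (a - b') := congrArg Subtype.val hyz
    refine AddSubgroup.mem_sup.mpr ⟨b' + b₂, add_mem hb'B hb₂B, a - b' - b₂, ?_, by abel⟩
    show mk (a - b' - b₂) ∈ T
    have heq : mk (a - b' - b₂) = (z : A ⧸ C₀) := by
      have h3 : mk (a - b' - b₂) = mk (a - b') - mk b₂ := by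
        rw [← map_sub]
      rw [h3, hb₂, ← hsum]
      abel
    rw [heq]
    exact ⟨z, hz, rfl⟩
  · -- B ⊓ C = ⊥
    rw [eq_bot_iff]
    rintro x ⟨hxB, hxC⟩
    obtain ⟨z, hzT', hz⟩ := hxC
    have hzB : z ∈ Bbar.addSubgroupOf S := by
      rw [AddSubgroup.mem_addSubgroupOf]
      exact ⟨x, hxB, hz.symm⟩
    have : z ∈ Bbar.addSubgroupOf S ⊓ T' := ⟨hzB, hzT'⟩
    rw [hT'inf] at this
    have hx0 : mk x = 0 := by rw [← hz, this]; rfl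
    have : x ∈ C₀ := (hker x).mp hx0
    simpa using hBC₀ x hxB this

/-- Kulikov's theorem (bounded case): a pure subgroup `B` of a torsion abelian group `A`
with `m • A = 0` for some positive integer `m` is a direct summand of `A`. -/
theorem stmt10 {A : Type*} [AddCommGroup A]
    (htors : ∀ x : A, ∃ n : ℕ, 0 < n ∧ n • x = 0)
    (m : ℕ) (hm : 0 < m) (hbdd : ∀ x : A, m • x = 0)
    (B : AddSubgroup A)
    (hpure : ∀ (n : ℕ) (a : A), n • a ∈ B → ∃ b ∈ B, n • b = n • a) :
    ∃ C : AddSubgroup A, B ⊔ C = ⊤ ∧ B ⊓ C = ⊥ :=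
  kulikov_aux m hm B hbdd hpure
end

section
/- Every pure subgroup of a finitely generated abelian group is a direct summand. -/
private lemma zmod_hom_ext {q : ℕ} {X : Type*} [AddGroup X] {h1 h2 : ZMod q →+ X}
    (h : h1 1 = h2 1) : h1 = h2 := by
  ext y
  obtain ⟨k, rfl⟩ := ZMod.intCast_surjective y
  rw [← zsmul_one k, map_zsmul, map_zsmul, h]

/-- Every pure subgroup of a finitely generated abelian group is a direct summand. -/
theorem stmt11 {B : Type*} [AddCommGroup B] (hfg : AddGroup.FG B) (A : AddSubgroup B)
    (hpure : ∀ (n : ℕ) (b : B), n • b ∈ A → ∃ a ∈ A, n • a = n • b) :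
    ∃ C : AddSubgroup B, A ⊔ C = ⊤ ∧ A ⊓ C = ⊥ := by
  classical
  haveI := hfg
  set π : B →+ B ⧸ A := QuotientAddGroup.mk' A with hπ
  have hπs : Function.Surjective π := QuotientAddGroup.mk'_surjective A
  obtain ⟨n, ι, fι, p, hp, ee, ⟨E⟩⟩ :=
    AddCommGroup.equiv_free_prod_directSum_zmod (B ⧸ A)
  set q : ι → ℕ := fun i => p i ^ ee i with hq
  -- free part
  set bfree : Fin n → B := fun i => (hπs (E.symm (Finsupp.single i 1, 0))).choose with hbf
  have hbfree : ∀ i, π (bfree i) = E.symm (Finsupp.single i 1, 0) :=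
    fun i => (hπs (E.symm (Finsupp.single i 1, 0))).choose_spec
  set f : (Fin n →₀ ℤ) →+ B :=
    Finsupp.liftAddHom (fun i => zmultiplesHom B (bfree i)) with hf
  have hfπ : ∀ m : Fin n →₀ ℤ, π (f m) = E.symm (m, 0) := by
    have : π.comp f =
        (E.symm.toAddMonoidHom).comp (AddMonoidHom.inl (Fin n →₀ ℤ) _) := by
      apply Finsupp.addHom_ext'
      intro i
      apply AddMonoidHom.ext_int
      simp [hf, hbfree i]
    intro m
    exact DFunLike.congr_fun this m
  -- torsion part
  have hc : ∀ i, ∃ c : B, π c = E.symm (0, DirectSum.of (fun j => ZMod (q j)) i 1)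
      ∧ (q i) • c = 0 := by
    intro i
    obtain ⟨b, hb⟩ := hπs (E.symm (0, DirectSum.of (fun j => ZMod (q j)) i 1))
    have hqb : (q i) • b ∈ A := by
      have hz : π ((q i) • b) = 0 := by
        rw [map_nsmul, hb, ← map_nsmul]
        have : (q i) • ((0 : Fin n →₀ ℤ), DirectSum.of (fun j => ZMod (q j)) i 1) = 0 := by
          ext
          · simp
          · simp [← DirectSum.of_smul]
        rw [this, map_zero]
      rwa [hπ, QuotientAddGroup.mk'_apply, QuotientAddGroup.eq_zero_iff] at hz
    obtain ⟨a, ha, haq⟩ := hpure (q i) b hqb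
    refine ⟨b - a, ?_, ?_⟩
    · rw [map_sub, hb]
      have : π a = 0 := by
        rw [hπ, QuotientAddGroup.mk'_apply]
        exact (QuotientAddGroup.eq_zero_iff a).mpr ha
      rw [this, sub_zero]
    · rw [smul_sub, haq, sub_self]
  choose c hc1 hc2 using hc
  have hcz : ∀ i, zmultiplesHom B (c i) ((q i : ℤ)) = 0 := by
    intro i
    simpa [natCast_zsmul] using hc2 i
  set g : ∀ i, ZMod (q i) →+ B := (fun i => ZMod.lift (q i) ⟨zmultiplesHom B (c i), hcz i⟩) with hg
  set gtot : DirectSum ι (fun i => ZMod (q i)) →+ B := DirectSum.toAddMonoid g with hgt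
  have hgπ : ∀ m : DirectSum ι (fun i => ZMod (q i)), π (gtot m) = E.symm (0, m) := by
    have : π.comp gtot =
        (E.symm.toAddMonoidHom).comp (AddMonoidHom.inr (Fin n →₀ ℤ) _) := by
      apply DirectSum.addHom_ext'
      intro i
      apply zmod_hom_ext
      simp only [AddMonoidHom.comp_apply, hgt, DirectSum.toAddMonoid_of,
        AddMonoidHom.inr_apply, AddEquiv.coe_toAddMonoidHom]
      have h1 : (1 : ZMod (q i)) = ((1 : ℤ) : ZMod (q i)) := by norm_cast
      rw [h1, ZMod.lift_coe]
      simp only [Int.cast_one, zmultiplesHom_apply, one_zsmul]; exact hc1 i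
    intro m
    exact DFunLike.congr_fun this m
  -- the section
  set s : (B ⧸ A) →+ B := (f.coprod gtot).comp E.toAddMonoidHom with hs
  have hsec : ∀ x : B ⧸ A, π (s x) = x := by
    intro x
    simp only [hs, AddMonoidHom.comp_apply, AddMonoidHom.coprod_apply, map_add,
      hfπ, hgπ, AddEquiv.coe_toAddMonoidHom]
    rw [← map_add, Prod.mk_add_mk, add_zero, zero_add, Prod.mk.eta, AddEquiv.symm_apply_apply]
  refine ⟨s.range, ?_, ?_⟩
  · rw [eq_top_iff]
    intro b _
    have hmem : b - s (π b) ∈ A := by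
      have hz : π (b - s (π b)) = 0 := by rw [map_sub, hsec, sub_self]
      rwa [hπ, QuotientAddGroup.mk'_apply, QuotientAddGroup.eq_zero_iff] at hz
    have : b = (b - s (π b)) + s (π b) := by abel
    rw [this]
    exact AddSubgroup.add_mem_sup hmem ⟨π b, rfl⟩
  · rw [eq_bot_iff]
    rintro x ⟨hxA, y, rfl⟩
    have : y = 0 := by
      rw [← hsec y]
      rw [hπ, QuotientAddGroup.mk'_apply]
      exact (QuotientAddGroup.eq_zero_iff _).mpr hxA
    rw [this, map_zero]
    exact AddSubgroup.mem_bot.mpr rfl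
end

section
/- An abelian monoid M is regular (i.e., 2x ≤ x for all x ∈ M, where a ≤ b means there exists c with a + c = b) if and only if M is a disjoint union of subsemigroups each of which is a group, namely the groups G_M[e] = {x ∈ M : e ≤ x ≤ e} for e ranging over the idempotents of M, where every element of M lies in exactly one G_M[e]. -/
/-- An abelian monoid `M` is regular (`2x ≤ x` for all `x`, for the algebraic preorder)
iff it is the disjoint union of the groups `G_M[e] = {x : e ≤ x ≤ e}`, `e` idempotent:
every element lies in exactly one `G_M[e]`, and each `G_M[e]` is a group with
identity `e`. -/
theorem stmt12 {M : Type*} [AddCommMonoid M] :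
    (∀ x : M, ∃ c : M, (x + x) + c = x) ↔
      (∀ x : M, ∃! e : M, (e + e = e) ∧ (∃ c, e + c = x) ∧ (∃ c, x + c = e)) ∧
      (∀ e : M, e + e = e → ∀ x : M, (∃ c, e + c = x) → (∃ c, x + c = e) →
        (e + x = x ∧
          ∃ y : M, ((∃ c, e + c = y) ∧ (∃ c, y + c = e)) ∧ x + y = e)) := by
  constructor
  · intro h
    constructor
    · intro x
      obtain ⟨c, hc⟩ := h x
      have hex : (x + c) + x = x := by rw [show (x + c) + x = (x + x) + c by abel, hc]
      refine ⟨x + c, ⟨?_, ⟨x, hex⟩, ⟨c, rfl⟩⟩, ?_⟩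
      · rw [show (x + c) + (x + c) = ((x + c) + x) + c by abel, hex]
      · rintro f ⟨hf, ⟨a, ha⟩, ⟨b, hb⟩⟩
        have h1 : f = (x + c) + (x + b) := by
          rw [show (x + c) + (x + b) = ((x + c) + x) + b by abel, hex, hb]
        have h2 : x + c = f + (a + c) := by
          rw [show f + (a + c) = (f + a) + c by abel, ha]
        have e1 : (x + c) + f = f := by
          rw [h1, show (x+c)+((x+c)+(x+b)) = ((x+c)+(x+c))+(x+b) by abel,
            show (x + c) + (x + c) = ((x + c) + x) + c by abel, hex]
        have e2 : (x + c) + f = x + c := by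
          conv_lhs => rw [h2]
          rw [show (f + (a + c)) + f = (f + f) + (a + c) by abel, hf, ← h2]
        rw [← e1, e2]
    · rintro e he x ⟨c1, hc1⟩ ⟨c2, hc2⟩
      have hex : e + x = x := by rw [← hc1, ← add_assoc, he]
      refine ⟨hex, e + c2, ⟨⟨c2, rfl⟩, ⟨x, ?_⟩⟩, ?_⟩
      · rw [show (e + c2) + x = e + (x + c2) by abel, hc2, he]
      · rw [show x + (e + c2) = e + (x + c2) by abel, hc2, he]
  · rintro ⟨h1, h2⟩ x
    obtain ⟨e, ⟨he, hle, hge⟩, -⟩ := h1 x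
    obtain ⟨hex, y, -, hxy⟩ := h2 e he x hle hge
    exact ⟨y, by rw [add_assoc, hxy, add_comm, hex]⟩
end

section
/- Let Λ be a semilattice (abelian idempotent monoid), G an abelian group, and for each e ∈ Λ let G_e be a subgroup of G such that G_0 = {0}, G_e + G_f = G_{e+f} for all e, f ∈ Λ, and G_e ∩ G_f = ⋃{G_g : g ∈ Λ, g ≤ e and g ≤ f} for all e, f ∈ Λ. Then the set M = ⋃_{e∈Λ} ({e} × G_e) ⊆ Λ × G is a submonoid of Λ × G, and M is a regular conical abelian monoid whose idempotents are exactly the elements (e, 0) for e ∈ Λ. -/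
/-- Given a semilattice `Λ` (idempotent abelian monoid), an abelian group `G` and
subgroups `G_e` with `G_0 = 0`, `G_e + G_f = G_{e+f}` and
`G_e ∩ G_f = ⋃ {G_g : g ≤ e, f}`, the set `⋃_e {e} × G_e` is a submonoid of `Λ × G`
that is conical and regular, whose idempotents are exactly the pairs `(e, 0)`. -/
theorem stmt14 {Λ G : Type*} [AddCommMonoid Λ] (hidem : ∀ e : Λ, e + e = e)
    [AddCommGroup G] (Gs : Λ → AddSubgroup G)
    (h0 : Gs 0 = ⊥)
    (hsum : ∀ e f : Λ, Gs e ⊔ Gs f = Gs (e + f))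
    (hinter : ∀ e f : Λ, ((Gs e ⊓ Gs f : AddSubgroup G) : Set G)
        = ⋃ g ∈ {g : Λ | g + e = e ∧ g + f = f}, (Gs g : Set G)) :
    ∃ N : AddSubmonoid (Λ × G),
      (N : Set (Λ × G)) = {p : Λ × G | p.2 ∈ Gs p.1} ∧
      (∀ x ∈ N, ∀ y ∈ N, x + y = 0 → x = 0 ∧ y = 0) ∧
      (∀ x ∈ N, ∃ c ∈ N, (x + x) + c = x) ∧
      (∀ x ∈ N, (x + x = x ↔ x.2 = 0)) := by
  refine ⟨{ carrier := {p : Λ × G | p.2 ∈ Gs p.1}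
            zero_mem' := by simp [h0]
            add_mem' := by
              intro a b ha hb
              have : a.2 + b.2 ∈ Gs a.1 ⊔ Gs b.1 :=
                add_mem (AddSubgroup.mem_sup_left ha) (AddSubgroup.mem_sup_right hb)
              simpa [hsum] using this }, rfl, ?_, ?_, ?_⟩
  · intro x hx y hy hxy
    have h1 : x.1 + y.1 = 0 := congrArg Prod.fst hxy
    have h2 : x.2 + y.2 = 0 := congrArg Prod.snd hxy
    have h1' : y.1 + x.1 = 0 := by rw [add_comm]; exact h1
    have hx1 : x.1 = 0 := by
      rw [← add_zero x.1, ← h1, ← add_assoc, hidem]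
    have hy1 : y.1 = 0 := by
      rw [← add_zero y.1, ← h1', ← add_assoc, hidem]
    have hx2 : x.2 ∈ Gs x.1 := hx
    rw [hx1, h0] at hx2
    have hx2' : x.2 = 0 := by simpa using hx2
    have hy2 : y.2 = 0 := by rwa [hx2', zero_add] at h2
    exact ⟨Prod.ext hx1 hx2', Prod.ext hy1 hy2⟩
  · intro x hx
    have hx' : x.2 ∈ Gs x.1 := hx
    refine ⟨(x.1, -x.2), neg_mem hx', ?_⟩
    refine Prod.ext ?_ ?_
    · show x.1 + x.1 + x.1 = x.1
      rw [hidem, hidem]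
    · show x.2 + x.2 + -x.2 = x.2
      abel
  · intro x hx
    constructor
    · intro h
      have h2 : x.2 + x.2 = x.2 := congrArg Prod.snd h
      exact add_eq_left.mp h2
    · intro h
      refine Prod.ext (hidem x.1) ?_
      show x.2 + x.2 = x.2
      simp [h]
end

section
/- Let D be a finite distributive lattice with least element 0, let G be an abelian group, and let u ↦ H_u be a lattice homomorphism from D to Sub(G) with H_0 = {0}, such that for every join-irreducible p of D there is a subgroup K_p with H_p = H_{p_*} ⊕ K_p. Then for all u ∈ D, H_u equals the internal direct sum of the family (K_p : p join-irreducible, p ≤ u). -/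
attribute [local instance] Classical.propDecidable

section Aux

variable {D G : Type*} [DistribLattice D] [Fintype D] [OrderBot D] [AddCommGroup G]

/-- Key independence lemma: for any finset `s` of sup-irreducible elements and any
`p ∈ s`, the subgroup `K p` is disjoint from the sup of the other `K q`'s. -/
theorem stmt19_aux (H : LatticeHom D (AddSubgroup G))
    (pstar : D → D)
    (hps : ∀ p : D, SupIrred p → pstar p ⋖ p ∧ ∀ x : D, x < p → x ≤ pstar p)
    (K : D → AddSubgroup G)
    (hK : ∀ p : D, SupIrred p → H (pstar p) ⊔ K p = H p ∧ H (pstar p) ⊓ K p = ⊥) :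
    ∀ s : Finset D, (∀ q ∈ s, SupIrred q) → ∀ p ∈ s,
      Disjoint (K p) ((s.erase p).sup K) := by
  have hKle : ∀ q : D, SupIrred q → K q ≤ H q := fun q hq => (hK q hq).1 ▸ le_sup_right
  -- the case of a maximal element
  have key : ∀ t : Finset D, (∀ q ∈ t, SupIrred q) → ∀ m ∈ t, (∀ b ∈ t, ¬ m < b) →
      Disjoint (K m) ((t.erase m).sup K) := by
    intro t ht m hm hmax
    set v := (t.erase m).sup id with hv
    have h1 : (t.erase m).sup K ≤ H v := by
      refine Finset.sup_le fun q hq => ?_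
      exact (hKle q (ht q (Finset.mem_of_mem_erase hq))).trans
        (OrderHomClass.mono H (Finset.le_sup (f := id) hq))
    have hmv : ¬ m ≤ v := by
      intro h
      obtain ⟨q, hq, hle⟩ :=
        ((supPrime_iff_supIrred.2 (ht m hm)).le_finset_sup).1 h
      have hqm : q ≠ m := (Finset.mem_erase.1 hq).1
      exact hmax q (Finset.mem_of_mem_erase hq)
        (lt_of_le_of_ne hle (fun e => hqm e.symm))
    have hlt : m ⊓ v < m :=
      lt_of_le_of_ne inf_le_left (fun h => hmv (h ▸ inf_le_right))
    have h2 : m ⊓ v ≤ pstar m := (hps m (ht m hm)).2 _ hlt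
    rw [disjoint_iff_inf_le]
    calc K m ⊓ (t.erase m).sup K ≤ K m ⊓ H v := inf_le_inf_left _ h1
      _ ≤ H (m ⊓ v) ⊓ K m := by
          rw [map_inf]
          exact le_inf (le_inf ((inf_le_left).trans (hKle m (ht m hm))) inf_le_right)
            inf_le_left
      _ ≤ H (pstar m) ⊓ K m := inf_le_inf_right _ (OrderHomClass.mono H h2)
      _ = ⊥ := (hK m (ht m hm)).2
      _ ≤ ⊥ := le_rfl
  intro s
  induction s using Finset.strongInduction with
  | _ s ih =>
    intro hs p hp
    obtain ⟨m, hm, hmax⟩ : ∃ m ∈ s, ∀ b ∈ s, ¬ m < b := by obtain ⟨m, hm⟩ := s.exists_maximal ⟨p, hp⟩; exact ⟨m, hm.1, fun b hb h => lt_irrefl _ (lt_of_lt_of_le h (hm.2 hb h.le))⟩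
    by_cases hpm : p = m
    · subst hpm; exact key s hs p hm hmax
    · have hDm : Disjoint (K m) ((s.erase m).sup K) := key s hs m hm hmax
      have hIH : Disjoint (K p) (((s.erase m).erase p).sup K) :=
        ih (s.erase m) (Finset.erase_ssubset hm)
          (fun q hq => hs q (Finset.mem_of_mem_erase hq)) p
          (Finset.mem_erase.2 ⟨hpm, hp⟩)
      have hsup : K p ⊔ ((s.erase m).erase p).sup K = (s.erase m).sup K := by
        conv_rhs => rw [← Finset.insert_erase (Finset.mem_erase.2 ⟨hpm, hp⟩)]
        rw [Finset.sup_insert]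
      have hD : Disjoint (K p) (((s.erase m).erase p).sup K ⊔ K m) :=
        hIH.disjoint_sup_right_of_disjoint_sup_left (hsup ▸ hDm.symm)
      have heq : (s.erase p).sup K = ((s.erase m).erase p).sup K ⊔ K m := by
        rw [Finset.erase_right_comm]
        conv_lhs => rw [← Finset.insert_erase
          (Finset.mem_erase.2 ⟨fun e => hpm e.symm, hm⟩)]
        rw [Finset.sup_insert, sup_comm]
      rw [heq]
      exact hD

end Aux

/-- If `u ↦ H u` is a lattice homomorphism from a finite distributive lattice to
`Sub G` with `H ⊥ = 0`, and for every join-irreducible `p` one has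
`H p = H p_* ⊕ K p`, then for every `u`, `H u` is the internal direct sum of the
family `(K p : p join-irreducible, p ≤ u)`. -/
theorem stmt19 {D G : Type*} [DistribLattice D] [Fintype D] [OrderBot D] [AddCommGroup G]
    (H : LatticeHom D (AddSubgroup G)) (h0 : H ⊥ = ⊥)
    (pstar : D → D)
    (hps : ∀ p : D, SupIrred p → pstar p ⋖ p ∧ ∀ x : D, x < p → x ≤ pstar p)
    (K : D → AddSubgroup G)
    (hK : ∀ p : D, SupIrred p → H (pstar p) ⊔ K p = H p ∧ H (pstar p) ⊓ K p = ⊥) :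
    ∀ u : D,
      H u = (Finset.univ.filter (fun p : D => SupIrred p ∧ p ≤ u)).sup K ∧
      ∀ p : D, SupIrred p → p ≤ u →
        K p ⊓ (Finset.univ.filter (fun q : D => SupIrred q ∧ q ≤ u ∧ q ≠ p)).sup K = ⊥ := by
  have hKle : ∀ q : D, SupIrred q → K q ≤ H q := fun q hq => (hK q hq).1 ▸ le_sup_right
  have hHfin : ∀ t : Finset D, H (t.sup id) = t.sup (fun b => H b) := by
    intro t
    induction t using Finset.induction with
    | empty => simpa using h0
    | insert _ _ hat ih => rw [Finset.sup_insert, Finset.sup_insert, id_eq, map_sup, ih]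
  have part1 : ∀ u : D,
      H u = (Finset.univ.filter (fun p : D => SupIrred p ∧ p ≤ u)).sup K := by
    intro u
    induction u using WellFoundedLT.induction with
    | _ u ihu =>
      refine le_antisymm ?_ ?_
      · obtain ⟨s, hsup, hirr⟩ := exists_supIrred_decomposition u
        have hHu : H u = s.sup (fun b => H b) := by rw [← hsup]; exact hHfin s
        rw [hHu]
        refine Finset.sup_le fun b hb => ?_
        have hbirr : SupIrred b := hirr hb
        have hbu : b ≤ u := hsup ▸ Finset.le_sup (f := id) hb
        have hlt : pstar b < u := lt_of_lt_of_le ((hps b hbirr).1.lt) hbu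
        rw [← (hK b hbirr).1]
        refine sup_le ?_ ?_
        · rw [ihu _ hlt]
          refine Finset.sup_le fun q hq => ?_
          obtain ⟨-, hq1, hq2⟩ := Finset.mem_filter.1 hq
          exact Finset.le_sup
            (Finset.mem_filter.2 ⟨Finset.mem_univ _, hq1, hq2.trans hlt.le⟩)
        · exact Finset.le_sup (Finset.mem_filter.2 ⟨Finset.mem_univ _, hbirr, hbu⟩)
      · refine Finset.sup_le fun q hq => ?_
        obtain ⟨-, hqirr, hqu⟩ := Finset.mem_filter.1 hq
        exact (hKle q hqirr).trans (OrderHomClass.mono H hqu)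
  intro u
  refine ⟨part1 u, fun p hpirr hpu => ?_⟩
  have hps' : p ∈ Finset.univ.filter (fun q : D => SupIrred q ∧ q ≤ u) :=
    Finset.mem_filter.2 ⟨Finset.mem_univ _, hpirr, hpu⟩
  have hset : Finset.univ.filter (fun q : D => SupIrred q ∧ q ≤ u ∧ q ≠ p) =
      (Finset.univ.filter (fun q : D => SupIrred q ∧ q ≤ u)).erase p := by
    ext q
    simp only [Finset.mem_filter, Finset.mem_erase, Finset.mem_univ, true_and]
    tauto
  rw [hset]
  exact disjoint_iff.1
    (stmt19_aux H pstar hps K hK _ (fun q hq => (Finset.mem_filter.1 hq).2.1) p hps')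
end
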